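/- arXiv:2602.22083 — 6 statements merged into one kernel-verified Lean document; each statement's English description precedes it below -/
import Mathlib

section
/- With the setup of the coarsening-error identity, suppose additionally that μ is continuously differentiable on each bin B_k with |μ'(m)| ≤ L for all m in every bin, and each bin B_k is an interval of width w_k ≤ w_max. Then |Σ_k {μ_k(1) − μ_k(0)} g_k(0)| ≤ L · Σ_k w_k g_k(0) ≤ L · w_max. -/
/-!
A derivative bounded by `L` confines `μ` on a bin `[c, d]` to an interval `[lo, lo + L (d - c)]`
(take `lo` the minimum of `μ` on the bin). Each `μ_k(a)` is an `f_a`-weighted mean of `μ` over the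
bin, hence lies in that interval too, so `|μ_k(1) - μ_k(0)| ≤ L w_k`; averaging against `g_k(0)`
gives the first bound, and `Σ_k g_k(0) = 1` gives the second.
-/

open MeasureTheory Set

theorem exists_mapsTo_Icc_of_abs_deriv_le {μ μ' : ℝ → ℝ} {c d L : ℝ} (hcd : c ≤ d)
    (hderiv : ∀ m ∈ Icc c d, HasDerivAt μ (μ' m) m ∧ |μ' m| ≤ L) :
    ∃ lo, MapsTo μ (Icc c d) (Icc lo (lo + L * (d - c))) := by
  have hL : 0 ≤ L := (abs_nonneg _).trans (hderiv c ⟨le_rfl, hcd⟩).2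
  have hcont : ContinuousOn μ (Icc c d) := fun m hm =>
    (hderiv m hm).1.continuousAt.continuousWithinAt
  obtain ⟨xmin, hxmin, hmin⟩ := isCompact_Icc.exists_isMinOn (nonempty_Icc.2 hcd) hcont
  refine ⟨μ xmin, fun m hm => ⟨hmin hm, ?_⟩⟩
  have hlip : |μ m - μ xmin| ≤ L * |m - xmin| := by
    simpa only [Real.norm_eq_abs] using
      (convex_Icc c d).norm_image_sub_le_of_norm_hasDerivWithin_le
        (fun x hx => (hderiv x hx).1.hasDerivWithinAt) (fun x hx => (hderiv x hx).2) hxmin hm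
  have hdist : |m - xmin| ≤ d - c := abs_sub_le_iff.2 ⟨by linarith [hm.2, hxmin.1],
    by linarith [hm.1, hxmin.2]⟩
  linarith [le_abs_self (μ m - μ xmin), mul_le_mul_of_nonneg_left hdist hL]

theorem setIntegral_mul_div_setIntegral_mem_Icc {α : Type*} [MeasurableSpace α] {ν : Measure α}
    {s : Set α} {φ w : α → ℝ} {lo hi : ℝ} (hs : MeasurableSet s) (hw : ∀ m ∈ s, 0 ≤ w m)
    (hwi : IntegrableOn w s ν) (hφwi : IntegrableOn (fun m => φ m * w m) s ν)
    (hpos : 0 < ∫ m in s, w m ∂ν) (hφ : MapsTo φ s (Icc lo hi)) :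
    (∫ m in s, φ m * w m ∂ν) / (∫ m in s, w m ∂ν) ∈ Icc lo hi := by
  have hconst : ∀ r : ℝ, ∫ m in s, r * w m ∂ν = r * ∫ m in s, w m ∂ν := fun r =>
    integral_const_mul r w
  have hlo := setIntegral_mono_on (hwi.const_mul lo) hφwi hs fun m hm =>
    mul_le_mul_of_nonneg_right (hφ hm).1 (hw m hm)
  have hhi := setIntegral_mono_on hφwi (hwi.const_mul hi) hs fun m hm =>
    mul_le_mul_of_nonneg_right (hφ hm).2 (hw m hm)
  rw [hconst] at hlo hhi
  exact ⟨(le_div_iff₀ hpos).2 hlo, (div_le_iff₀ hpos).2 hhi⟩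

theorem stmt1_general (K : ℕ) (c d : Fin K → ℝ) (μ μ' f₀ f₁ : ℝ → ℝ) (L wmax : ℝ)
    (hcd : ∀ k, c k ≤ d k)
    (hw : ∀ k, d k - c k ≤ wmax)
    (hf₀nn : ∀ m, 0 ≤ f₀ m) (hf₁nn : ∀ m, 0 ≤ f₁ m)
    (hderiv : ∀ k, ∀ m ∈ Set.Icc (c k) (d k), HasDerivAt μ (μ' m) m ∧ |μ' m| ≤ L)
    (hLnn : 0 ≤ L)
    (hfint : ∀ (a : Fin 2) k,
      IntegrableOn (fun m => (if a = 0 then f₀ else f₁) m) (Set.Icc (c k) (d k)))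
    (hμfint : ∀ (a : Fin 2) k,
      IntegrableOn (fun m => μ m * (if a = 0 then f₀ else f₁) m) (Set.Icc (c k) (d k)))
    (g : Fin 2 → Fin K → ℝ)
    (hg : ∀ a k, g a k = ∫ m in Set.Icc (c k) (d k), (if a = 0 then f₀ else f₁) m)
    (hgpos : ∀ a k, 0 < g a k)
    (hgsum : ∑ k, g 0 k = 1)
    (μk : Fin 2 → Fin K → ℝ)
    (hμk : ∀ a k, μk a k =
      (∫ m in Set.Icc (c k) (d k), μ m * (if a = 0 then f₀ else f₁) m) / g a k) :
    |∑ k, (μk 1 k - μk 0 k) * g 0 k| ≤ L * ∑ k, (d k - c k) * g 0 k ∧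
      L * ∑ k, (d k - c k) * g 0 k ≤ L * wmax := by
  have hbin : ∀ k, |μk 1 k - μk 0 k| ≤ L * (d k - c k) := by
    intro k
    obtain ⟨lo, hlo⟩ := exists_mapsTo_Icc_of_abs_deriv_le (hcd k) (hderiv k)
    have hmean : ∀ a, μk a k ∈ Icc lo (lo + L * (d k - c k)) := fun a => by
      rw [hμk, hg]
      refine setIntegral_mul_div_setIntegral_mem_Icc measurableSet_Icc (fun m _ => ?_)
        (hfint a k) (hμfint a k) (hg a k ▸ hgpos a k) hlo
      split
      exacts [hf₀nn m, hf₁nn m]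
    exact abs_sub_le_iff.2 ⟨by linarith [(hmean 1).2, (hmean 0).1],
      by linarith [(hmean 0).2, (hmean 1).1]⟩
  refine ⟨?_, mul_le_mul_of_nonneg_left ?_ hLnn⟩
  · calc |∑ k, (μk 1 k - μk 0 k) * g 0 k|
        ≤ ∑ k, |μk 1 k - μk 0 k| * g 0 k := by
          refine (Finset.abs_sum_le_sum_abs _ _).trans_eq (Finset.sum_congr rfl fun k _ => ?_)
          rw [abs_mul, abs_of_pos (hgpos 0 k)]
      _ ≤ ∑ k, L * (d k - c k) * g 0 k :=
          Finset.sum_le_sum fun k _ => mul_le_mul_of_nonneg_right (hbin k) (hgpos 0 k).le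
      _ = L * ∑ k, (d k - c k) * g 0 k := by simp only [Finset.mul_sum, mul_assoc]
  · calc ∑ k, (d k - c k) * g 0 k
        ≤ ∑ k, wmax * g 0 k :=
          Finset.sum_le_sum fun k _ => mul_le_mul_of_nonneg_right (hw k) (hgpos 0 k).le
      _ = wmax := by rw [← Finset.mul_sum, hgsum, mul_one]

/-- Quantitative first-order bound of Lemma 1: the coarsening error is bounded
by `L` times the `g₀`-weighted average bin width, which is at most `L * wmax`. -/
theorem stmt1 (K : ℕ) (c d : Fin K → ℝ) (μ μ' f₀ f₁ : ℝ → ℝ) (L wmax : ℝ)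
    (hcd : ∀ k, c k ≤ d k)
    (hw : ∀ k, d k - c k ≤ wmax)
    (hdisj : Pairwise fun i j =>
      Disjoint (Set.Icc (c i) (d i)) (Set.Icc (c j) (d j)))
    (hf₀nn : ∀ m, 0 ≤ f₀ m) (hf₁nn : ∀ m, 0 ≤ f₁ m)
    (hsupp : ∀ m, f₀ m ≠ 0 → m ∈ ⋃ k, Set.Icc (c k) (d k))
    (hf₀1 : ∫ m, f₀ m = 1)
    (hderiv : ∀ k, ∀ m ∈ Set.Icc (c k) (d k), HasDerivAt μ (μ' m) m ∧ |μ' m| ≤ L)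
    (hLnn : 0 ≤ L)
    (hfint : ∀ (a : Fin 2) k,
      IntegrableOn (fun m => (if a = 0 then f₀ else f₁) m) (Set.Icc (c k) (d k)))
    (hμfint : ∀ (a : Fin 2) k,
      IntegrableOn (fun m => μ m * (if a = 0 then f₀ else f₁) m) (Set.Icc (c k) (d k)))
    (hmfint : ∀ (a : Fin 2) k,
      IntegrableOn (fun m => m * (if a = 0 then f₀ else f₁) m) (Set.Icc (c k) (d k)))
    (g : Fin 2 → Fin K → ℝ)
    (hg : ∀ a k, g a k = ∫ m in Set.Icc (c k) (d k), (if a = 0 then f₀ else f₁) m)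
    (hgpos : ∀ a k, 0 < g a k)
    (hgsum : ∑ k, g 0 k = 1)
    (μk : Fin 2 → Fin K → ℝ)
    (hμk : ∀ a k, μk a k =
      (∫ m in Set.Icc (c k) (d k), μ m * (if a = 0 then f₀ else f₁) m) / g a k) :
    |∑ k, (μk 1 k - μk 0 k) * g 0 k| ≤ L * ∑ k, (d k - c k) * g 0 k ∧
      L * ∑ k, (d k - c k) * g 0 k ≤ L * wmax :=
  stmt1_general K c d μ μ' f₀ f₁ L wmax hcd hw hf₀nn hf₁nn hderiv hLnn hfint hμfint g hg hgpos hgsum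
    μk hμk
end

section
/- Under the setup of the coarsening-error identity, suppose μ is twice continuously differentiable on each bin B_k with |μ''| ≤ L there, each bin is an interval of width w_k ≤ w_max, and let m_k(0) denote the mean of M restricted to B_k under f₀. Then the debiased coarsened functional θ̃ = Σ_k μ(m_k(0)) g_k(0) satisfies |θ̃ − ∫ μ(m) f₀(m) dm| ≤ (L/8) Σ_k w_k² g_k(0) ≤ L w_max² / 8. -/
/-!
On each bin `B = [c, d]`, expand `μ` to first order around the conditional mean `a` of `M`
given `M ∈ B`. The linear term has conditional expectation zero, and the Taylor remainder is at
most `(L / 2) (m - a) ^ 2`, whose conditional expectation is `L / 2` times the conditional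
variance; Popoviciu's inequality bounds that variance by `((d - c) / 2) ^ 2`. Multiplying by the
bin mass `g` and summing over the bins gives the first bound; `d - c ≤ wmax` and `∑ g = 1` give
the second.
-/
open MeasureTheory ProbabilityTheory Set

lemma abs_intervalIntegral_le_of_abs_le_mul_abs_sub {ψ : ℝ → ℝ} {a x L : ℝ}
    (h : ∀ t ∈ uIoc a x, |ψ t| ≤ L * |t - a|) :
    |∫ t in a..x, ψ t| ≤ L / 2 * (x - a) ^ 2 := by
  have hint : IntegrableOn (fun t => L * |t - a|) (uIoc a x) :=
    Continuous.integrableOn_uIoc (by fun_prop)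
  calc |∫ t in a..x, ψ t| = ‖∫ t in uIoc a x, ψ t‖ :=
        intervalIntegral.norm_integral_eq_norm_integral_uIoc ψ
    _ ≤ ∫ t in uIoc a x, L * |t - a| :=
        norm_integral_le_of_norm_le hint (ae_restrict_of_forall_mem measurableSet_uIoc h)
    _ = L / 2 * (x - a) ^ 2 := by
        have h := integral_pow_abs_sub_uIoc (a := a) (b := x) 1
        simp only [pow_one] at h
        rw [integral_const_mul, h, sq_abs]
        ring

lemma ContinuousOn.integrable_of_ae_mem {X E : Type*} [TopologicalSpace X] [MeasurableSpace X]
    [OpensMeasurableSpace X] [T2Space X] [NormedAddCommGroup E] {P : Measure X}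
    [IsFiniteMeasure P] {K : Set X} {g : X → E} (hg : ContinuousOn g K) (hK : IsCompact K)
    (hP : ∀ᵐ x ∂P, x ∈ K) :
    Integrable g P := by
  rw [← Measure.restrict_eq_self_of_ae_mem hP]
  exact hg.integrableOn_compact hK

section BoundedSecondDerivative

variable {f : ℝ → ℝ} {c d L : ℝ}

lemma abs_derivWithin_sub_le (hcd : c < d) (hf : ContDiffOn ℝ 2 f (Icc c d))
    (hL : ∀ m ∈ Icc c d, |iteratedDerivWithin 2 f (Icc c d) m| ≤ L)
    {y z : ℝ} (hy : y ∈ Icc c d) (hz : z ∈ Icc c d) :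
    |derivWithin f (Icc c d) z - derivWithin f (Icc c d) y| ≤ L * |z - y| := by
  have hf' : ContDiffOn ℝ 1 (derivWithin f (Icc c d)) (Icc c d) :=
    hf.derivWithin (uniqueDiffOn_Icc hcd) (by norm_num)
  refine Convex.norm_image_sub_le_of_norm_derivWithin_le (hf'.differentiableOn one_ne_zero)
    (fun m hm => ?_) (convex_Icc c d) hy hz
  simpa [iteratedDerivWithin_succ, iteratedDerivWithin_one] using hL m hm

lemma abs_sub_sub_derivWithin_mul_le (hcd : c < d) (hf : ContDiffOn ℝ 2 f (Icc c d))
    (hL : ∀ m ∈ Icc c d, |iteratedDerivWithin 2 f (Icc c d) m| ≤ L)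
    {a x : ℝ} (ha : a ∈ Icc c d) (hx : x ∈ Icc c d) :
    |f x - f a - derivWithin f (Icc c d) a * (x - a)| ≤ L / 2 * (x - a) ^ 2 := by
  set f' := derivWithin f (Icc c d)
  have hsub : uIcc a x ⊆ Icc c d := uIcc_subset_Icc ha hx
  have hint : IntervalIntegrable f' volume a x :=
    ((hf.continuousOn_derivWithin (uniqueDiffOn_Icc hcd) one_le_two).mono hsub).intervalIntegrable
  have hftc : ∫ t in a..x, f' t = f x - f a := by
    refine intervalIntegral.integral_eq_sub_of_hasDeriv_right (hf.continuousOn.mono hsub)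
      (fun t ht => ?_) hint
    have ht' : t ∈ Ioo c d :=
      ⟨(le_min ha.1 hx.1).trans_lt ht.1, ht.2.trans_le (max_le ha.2 hx.2)⟩
    have hft := (hf.differentiableOn two_ne_zero t (Ioo_subset_Icc_self ht')).hasDerivWithinAt
    exact (hft.hasDerivAt (Icc_mem_nhds ht'.1 ht'.2)).hasDerivWithinAt
  have hremainder : f x - f a - f' a * (x - a) = ∫ t in a..x, (f' t - f' a) := by
    rw [intervalIntegral.integral_sub hint intervalIntegrable_const, hftc,
      intervalIntegral.integral_const, smul_eq_mul, mul_comm]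
  rw [hremainder]
  exact abs_intervalIntegral_le_of_abs_le_mul_abs_sub fun t ht =>
    abs_derivWithin_sub_le hcd hf hL ha (hsub (uIoc_subset_uIcc ht))

lemma abs_apply_integral_sub_integral_le {P : Measure ℝ} [IsProbabilityMeasure P] (hcd : c < d)
    (hP : ∀ᵐ m ∂P, m ∈ Icc c d) (hf : ContDiffOn ℝ 2 f (Icc c d))
    (hL : ∀ m ∈ Icc c d, |iteratedDerivWithin 2 f (Icc c d) m| ≤ L) :
    |f (∫ m, m ∂P) - ∫ m, f m ∂P| ≤ L / 8 * (d - c) ^ 2 := by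
  have hint {g : ℝ → ℝ} (hg : Continuous g) : Integrable g P :=
    hg.continuousOn.integrable_of_ae_mem isCompact_Icc hP
  set a := ∫ m, m ∂P
  set f' := derivWithin f (Icc c d)
  have ha : a ∈ Icc c d := (convex_Icc c d).integral_mem isClosed_Icc hP (hint continuous_id)
  have hfi : Integrable f P := hf.continuousOn.integrable_of_ae_mem isCompact_Icc hP
  have hLnn : 0 ≤ L := (abs_nonneg _).trans (hL c ⟨le_rfl, hcd.le⟩)
  have hremainder : ∫ m, f m ∂P - f a = ∫ m, (f m - f a - f' a * (m - a)) ∂P := by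
    have hfa : Integrable (fun m => f m - f a) P := hfi.sub (integrable_const _)
    rw [integral_sub hfa ((hint (g := fun m => m - a) (by fun_prop)).const_mul _),
      integral_sub hfi (integrable_const _), integral_const_mul,
      integral_sub (hint continuous_id') (integrable_const a)]
    simp [a]
  have hvar : ∫ m, (m - a) ^ 2 ∂P ≤ ((d - c) / 2) ^ 2 := by
    rw [← variance_eq_integral (X := fun m => m) aemeasurable_id']
    exact variance_le_sq_of_bounded hP aemeasurable_id'
  calc |f a - ∫ m, f m ∂P| = ‖∫ m, (f m - f a - f' a * (m - a)) ∂P‖ := by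
        rw [abs_sub_comm, hremainder, Real.norm_eq_abs]
    _ ≤ ∫ m, L / 2 * (m - a) ^ 2 ∂P := norm_integral_le_of_norm_le (hint (by fun_prop))
        (hP.mono fun m hm => abs_sub_sub_derivWithin_mul_le hcd hf hL ha hm)
    _ = L / 2 * ∫ m, (m - a) ^ 2 ∂P := integral_const_mul _ _
    _ ≤ L / 2 * ((d - c) / 2) ^ 2 := by gcongr
    _ = L / 8 * (d - c) ^ 2 := by ring

end BoundedSecondDerivative

lemma withDensity_ofReal_apply_of_integrableOn {X : Type*} [MeasurableSpace X] {ν : Measure X}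
    {ρ : X → ℝ} {s : Set X} (hs : MeasurableSet s) (hρ : ∀ x, 0 ≤ ρ x)
    (hρs : IntegrableOn ρ s ν) :
    ν.withDensity (fun x => ENNReal.ofReal (ρ x)) s = ENNReal.ofReal (∫ x in s, ρ x ∂ν) := by
  rw [withDensity_apply _ hs, ofReal_integral_eq_lintegral_ofReal hρs (ae_of_all _ hρ)]

lemma integral_cond_withDensity_ofReal {X E : Type*} [MeasurableSpace X] [NormedAddCommGroup E]
    [NormedSpace ℝ E] {ν : Measure X} {ρ : X → ℝ} {s : Set X} (hs : MeasurableSet s)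
    (hρ : ∀ x, 0 ≤ ρ x) (hρs : IntegrableOn ρ s ν) (h : X → E) :
    ∫ x, h x ∂(ν.withDensity fun x => ENNReal.ofReal (ρ x))[|s] =
      (∫ x in s, ρ x ∂ν)⁻¹ • ∫ x in s, ρ x • h x ∂ν := by
  rw [ProbabilityTheory.cond, integral_smul_measure,
    withDensity_ofReal_apply_of_integrableOn hs hρ hρs,
    setIntegral_withDensity_eq_setIntegral_toReal_smul₀ hρs.1.aemeasurable.ennreal_ofReal
      (ae_of_all _ fun _ => ENNReal.ofReal_lt_top) h hs, ENNReal.toReal_inv,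
    ENNReal.toReal_ofReal (setIntegral_nonneg hs fun x _ => hρ x)]
  simp only [ENNReal.toReal_ofReal (hρ _)]

lemma lt_of_setIntegral_Icc_ne_zero {ρ : ℝ → ℝ} {c d : ℝ} (h : ∫ m in Icc c d, ρ m ≠ 0) :
    c < d := by
  by_contra! hdc
  exact h (by rw [Measure.restrict_eq_zero.mpr ((subsingleton_Icc_of_ge hdc).measure_zero _),
    integral_zero_measure])

lemma abs_mul_sub_setIntegral_le {f ρ : ℝ → ℝ} {c d L g a : ℝ} (hρ : ∀ m, 0 ≤ ρ m)
    (hρs : IntegrableOn ρ (Icc c d)) (hf : ContDiffOn ℝ 2 f (Icc c d))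
    (hL : ∀ m ∈ Icc c d, |iteratedDerivWithin 2 f (Icc c d) m| ≤ L)
    (hg : g = ∫ m in Icc c d, ρ m) (hgpos : 0 < g)
    (ha : a = (∫ m in Icc c d, m * ρ m) / g) :
    |f a * g - ∫ m in Icc c d, f m * ρ m| ≤ L / 8 * ((d - c) ^ 2 * g) := by
  have hcd : c < d := lt_of_setIntegral_Icc_ne_zero (hg ▸ hgpos.ne')
  set P := (volume.withDensity fun m => ENNReal.ofReal (ρ m))[|Icc c d]
  have : IsProbabilityMeasure P := by
    refine cond_isProbabilityMeasure_of_finite ?_ ?_ <;>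
      rw [withDensity_ofReal_apply_of_integrableOn measurableSet_Icc hρ hρs, ← hg]
    · exact ENNReal.ofReal_pos.mpr hgpos |>.ne'
    · exact ENNReal.ofReal_ne_top
  have hP (h : ℝ → ℝ) : ∫ m, h m ∂P = (∫ m in Icc c d, h m * ρ m) / g := by
    rw [integral_cond_withDensity_ofReal measurableSet_Icc hρ hρs, ← hg, smul_eq_mul,
      inv_mul_eq_div]
    simp only [smul_eq_mul, mul_comm]
  have hgap := abs_apply_integral_sub_integral_le (P := P) hcd (ae_cond_mem measurableSet_Icc)
    hf hL
  rw [hP, hP, ← ha] at hgap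
  calc |f a * g - ∫ m in Icc c d, f m * ρ m|
      = |f a - (∫ m in Icc c d, f m * ρ m) / g| * g := by
        rw [← abs_of_pos hgpos, ← abs_mul, abs_of_pos hgpos, sub_mul,
          div_mul_cancel₀ _ hgpos.ne']
    _ ≤ L / 8 * (d - c) ^ 2 * g := mul_le_mul_of_nonneg_right hgap hgpos.le
    _ = L / 8 * ((d - c) ^ 2 * g) := mul_assoc _ _ _

theorem stmt5_general (K : ℕ) (c d : Fin K → ℝ) (μ f₀ : ℝ → ℝ) (L wmax : ℝ)
    (hw : ∀ k, d k - c k ≤ wmax)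
    (hdisj : Pairwise fun i j =>
      Disjoint (Set.Icc (c i) (d i)) (Set.Icc (c j) (d j)))
    (hf₀nn : ∀ m, 0 ≤ f₀ m)
    (hsupp : ∀ m, f₀ m ≠ 0 → m ∈ ⋃ k, Set.Icc (c k) (d k))
    (hf₀int : Integrable f₀)
    (hμf₀int : Integrable (fun m => μ m * f₀ m))
    (hC2 : ∀ k, ContDiffOn ℝ 2 μ (Set.Icc (c k) (d k)))
    (hL : ∀ k, ∀ m ∈ Set.Icc (c k) (d k),
      |iteratedDerivWithin 2 μ (Set.Icc (c k) (d k)) m| ≤ L)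
    (hLnn : 0 ≤ L)
    (g mk : Fin K → ℝ)
    (hg : ∀ k, g k = ∫ m in Set.Icc (c k) (d k), f₀ m)
    (hgpos : ∀ k, 0 < g k) (hgsum : ∑ k, g k = 1)
    (hmk : ∀ k, mk k = (∫ m in Set.Icc (c k) (d k), m * f₀ m) / g k) :
    |∑ k, μ (mk k) * g k - ∫ m, μ m * f₀ m| ≤ (L / 8) * ∑ k, (d k - c k) ^ 2 * g k ∧
      (L / 8) * ∑ k, (d k - c k) ^ 2 * g k ≤ L * wmax ^ 2 / 8 := by
  have hbin k := abs_mul_sub_setIntegral_le hf₀nn hf₀int.integrableOn (hC2 k) (hL k) (hg k)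
    (hgpos k) (hmk k)
  have hsum : ∫ m, μ m * f₀ m = ∑ k, ∫ m in Icc (c k) (d k), μ m * f₀ m := by
    rw [← integral_iUnion_fintype (fun k => measurableSet_Icc) hdisj
      (fun k => hμf₀int.integrableOn), setIntegral_eq_integral_of_forall_compl_eq_zero]
    exact fun m hm => by_contra fun h => hm (hsupp m (right_ne_zero_of_mul h))
  refine ⟨?_, ?_⟩
  · calc |∑ k, μ (mk k) * g k - ∫ m, μ m * f₀ m|
        = |∑ k, (μ (mk k) * g k - ∫ m in Icc (c k) (d k), μ m * f₀ m)| := by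
          rw [hsum, Finset.sum_sub_distrib]
      _ ≤ ∑ k, L / 8 * ((d k - c k) ^ 2 * g k) :=
          (Finset.abs_sum_le_sum_abs _ _).trans (Finset.sum_le_sum fun k _ => hbin k)
      _ = L / 8 * ∑ k, (d k - c k) ^ 2 * g k := (Finset.mul_sum _ _ _).symm
  · have hcd k : c k < d k := lt_of_setIntegral_Icc_ne_zero (hg k ▸ (hgpos k).ne')
    calc L / 8 * ∑ k, (d k - c k) ^ 2 * g k ≤ L / 8 * ∑ k, wmax ^ 2 * g k := by
          gcongr with k
          exacts [(hgpos k).le, sub_nonneg.mpr (hcd k).le, hw k]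
      _ = L * wmax ^ 2 / 8 := by rw [← Finset.mul_sum, hgsum]; ring

/-- Lemma 2: the debiased coarsened functional is within
`(L/8) Σ_k w_k² g_k ≤ L wmax² / 8` of the true functional. -/
theorem stmt5 (K : ℕ) (c d : Fin K → ℝ) (μ f₀ : ℝ → ℝ) (L wmax : ℝ)
    (hcd : ∀ k, c k ≤ d k) (hw : ∀ k, d k - c k ≤ wmax)
    (hdisj : Pairwise fun i j =>
      Disjoint (Set.Icc (c i) (d i)) (Set.Icc (c j) (d j)))
    (hf₀nn : ∀ m, 0 ≤ f₀ m)
    (hsupp : ∀ m, f₀ m ≠ 0 → m ∈ ⋃ k, Set.Icc (c k) (d k))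
    (hf₀int : Integrable f₀)
    (hμf₀int : Integrable (fun m => μ m * f₀ m))
    (hmf₀int : Integrable (fun m => m * f₀ m))
    (hC2 : ∀ k, ContDiffOn ℝ 2 μ (Set.Icc (c k) (d k)))
    (hL : ∀ k, ∀ m ∈ Set.Icc (c k) (d k),
      |iteratedDerivWithin 2 μ (Set.Icc (c k) (d k)) m| ≤ L)
    (hLnn : 0 ≤ L)
    (g mk : Fin K → ℝ)
    (hg : ∀ k, g k = ∫ m in Set.Icc (c k) (d k), f₀ m)
    (hgpos : ∀ k, 0 < g k) (hgsum : ∑ k, g k = 1)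
    (hmk : ∀ k, mk k = (∫ m in Set.Icc (c k) (d k), m * f₀ m) / g k) :
    |∑ k, μ (mk k) * g k - ∫ m, μ m * f₀ m| ≤ (L / 8) * ∑ k, (d k - c k) ^ 2 * g k ∧
      (L / 8) * ∑ k, (d k - c k) ^ 2 * g k ≤ L * wmax ^ 2 / 8 :=
  stmt5_general K c d μ f₀ L wmax hw hdisj hf₀nn hsupp hf₀int hμf₀int hC2 hL hLnn g mk hg hgpos
    hgsum hmk
end

section
/- If the support of M is contained in a bounded interval of length S, and the K bins are chosen to each have width S/K, and μ is twice continuously differentiable with |μ''| ≤ L on the support, then the debiased coarsening error satisfies |θ̃ − ∫ μ f₀| ≤ L S² / (8 K²), i.e., it is O(1/K²). -/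
/-!
On a bin `[a, b]` let `x` be the `f₀`-weighted mean. Since `|μ''| ≤ L`, `μ` deviates from its
tangent line at `x` by at most `L (m - x)² / 2`, and the tangent line integrates against `f₀` to
exactly `μ x · g`, because `x` is the mean. So the error on the bin is at most `L / 2` times the
variance of the bin, which is at most `((b - a) / 2)² g`. Summing over `K` bins of width `S / K`,
whose masses `g` add up to `1`, gives `L S² / (8 K²)`.
-/

open MeasureTheory Set

theorem Convex.norm_image_sub_sub_smul_le_of_norm_deriv_sub_le {E : Type*}
    [NormedAddCommGroup E] [NormedSpace ℝ E] {f f' : ℝ → E} {s : Set ℝ} {x y L : ℝ}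
    (hs : Convex ℝ s) (hf : ∀ z ∈ s, HasDerivWithinAt f (f' z) s z)
    (bound : ∀ z ∈ s, ‖f' z - f' x‖ ≤ L * |z - x|) (hx : x ∈ s) (hy : y ∈ s) :
    ‖f y - f x - (y - x) • f' x‖ ≤ L / 2 * (y - x) ^ 2 := by
  -- Restricting to the segment `t ↦ x + t (y - x)` avoids treating `y < x` separately.
  set γ : ℝ → ℝ := fun t => x + t * (y - x)
  have hγ : MapsTo γ (Icc 0 1) s := fun t ht => by
    simpa [γ, add_comm, mul_comm, ← smul_eq_mul] using hs.add_smul_sub_mem hx hy ht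
  set φ : ℝ → E := fun t => f (γ t) - f x - (t * (y - x)) • f' x
  have hφ : ∀ t ∈ Icc (0 : ℝ) 1,
      HasDerivWithinAt φ ((y - x) • (f' (γ t) - f' x)) (Icc 0 1) t := fun t ht => by
    have hγt : HasDerivWithinAt γ (y - x) (Icc 0 1) t :=
      ((hasDerivAt_mul_const (y - x)).const_add x).hasDerivWithinAt
    exact ((((hf _ (hγ ht)).scomp t hγt hγ).sub_const (f x)).sub
      (((hasDerivAt_id t).mul_const (y - x)).hasDerivWithinAt.smul_const (f' x))).congr_deriv
      (by rw [one_mul, smul_sub])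
  have hbound : ∀ t ∈ Ico (0 : ℝ) 1,
      ‖(y - x) • (f' (γ t) - f' x)‖ ≤ L * (y - x) ^ 2 * t := fun t ht => by
    rw [norm_smul, Real.norm_eq_abs]
    calc |y - x| * ‖f' (γ t) - f' x‖
        ≤ |y - x| * (L * |γ t - x|) := by gcongr; exact bound _ (hγ (Ico_subset_Icc_self ht))
      _ = L * (y - x) ^ 2 * t := by
        simp only [γ, add_sub_cancel_left, abs_mul, abs_of_nonneg ht.1]
        rw [← sq_abs (y - x)]
        ring
  have hB : ∀ t, HasDerivAt (fun t => L / 2 * (y - x) ^ 2 * t ^ 2) (L * (y - x) ^ 2 * t) t :=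
    fun t => ((hasDerivAt_pow 2 t).const_mul (L / 2 * (y - x) ^ 2)).congr_deriv (by ring)
  simpa [φ, γ] using image_norm_le_of_norm_deriv_right_le_deriv_boundary
    (fun t ht => (hφ t ht).continuousWithinAt)
    (fun t ht => (hφ t (Ico_subset_Icc_self ht)).mono_of_mem_nhdsWithin
      (Icc_mem_nhdsGE_of_mem ht))
    (by simp [φ, γ]) hB hbound (right_mem_Icc.2 zero_le_one)

theorem abs_sub_sub_derivWithin_mul_le_of_abs_iteratedDerivWithin_two_le {μ : ℝ → ℝ}
    {a b L : ℝ} (hab : a < b) (hμ : ContDiffOn ℝ 2 μ (Icc a b))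
    (hL : ∀ y ∈ Icc a b, |iteratedDerivWithin 2 μ (Icc a b) y| ≤ L)
    {x m : ℝ} (hx : x ∈ Icc a b) (hm : m ∈ Icc a b) :
    |μ m - μ x - derivWithin μ (Icc a b) x * (m - x)| ≤ L / 2 * (m - x) ^ 2 := by
  have hd : ∀ y ∈ Icc a b, HasDerivWithinAt (derivWithin μ (Icc a b))
      (iteratedDerivWithin 2 μ (Icc a b) y) (Icc a b) y := fun y hy => by
    rw [iteratedDerivWithin_succ', iteratedDerivWithin_one]
    exact ((hμ.derivWithin (m := 1) (uniqueDiffOn_Icc hab) (by norm_num)).differentiableOn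
      one_ne_zero y hy).hasDerivWithinAt
  have hLip : ∀ z ∈ Icc a b,
      ‖derivWithin μ (Icc a b) z - derivWithin μ (Icc a b) x‖ ≤ L * |z - x| := fun z hz => by
    simpa using (convex_Icc a b).norm_image_sub_le_of_norm_hasDerivWithin_le hd hL hx hz
  have := (convex_Icc a b).norm_image_sub_sub_smul_le_of_norm_deriv_sub_le
    (fun y hy => (hμ.differentiableOn two_ne_zero y hy).hasDerivWithinAt) hLip hx hm
  rwa [Real.norm_eq_abs, smul_eq_mul, mul_comm (m - x)] at this

noncomputable def weightedMean (f : ℝ → ℝ) (s : Set ℝ) : ℝ :=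
  (∫ m in s, m * f m) / ∫ m in s, f m

section Bin

variable {f : ℝ → ℝ} {a b : ℝ}

theorem weightedMean_mem_Icc (hf₀ : ∀ m ∈ Icc a b, 0 ≤ f m) (hf : IntegrableOn f (Icc a b))
    (hg : 0 < ∫ m in Icc a b, f m) : weightedMean f (Icc a b) ∈ Icc a b := by
  have hmf : IntegrableOn (fun m => m * f m) (Icc a b) :=
    hf.continuousOn_mul continuousOn_id isCompact_Icc
  constructor
  · rw [weightedMean, le_div_iff₀ hg, ← integral_const_mul]
    exact setIntegral_mono_on (hf.const_mul a) hmf measurableSet_Icc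
      fun m hm => mul_le_mul_of_nonneg_right hm.1 (hf₀ m hm)
  · rw [weightedMean, div_le_iff₀ hg, ← integral_const_mul]
    exact setIntegral_mono_on hmf (hf.const_mul b) measurableSet_Icc
      fun m hm => mul_le_mul_of_nonneg_right hm.2 (hf₀ m hm)

theorem setIntegral_sq_sub_mul_eq (hf : IntegrableOn f (Icc a b)) (t : ℝ) :
    ∫ m in Icc a b, (m - t) ^ 2 * f m
      = (∫ m in Icc a b, m ^ 2 * f m) - 2 * t * (∫ m in Icc a b, m * f m)
        + t ^ 2 * ∫ m in Icc a b, f m := by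
  have h2 : IntegrableOn (fun m => m ^ 2 * f m) (Icc a b) :=
    hf.continuousOn_mul (continuousOn_id.pow 2) isCompact_Icc
  have h1 : IntegrableOn (fun m => m * f m) (Icc a b) :=
    hf.continuousOn_mul continuousOn_id isCompact_Icc
  have h21 : IntegrableOn (fun m => m ^ 2 * f m - 2 * t * (m * f m)) (Icc a b) :=
    h2.sub (h1.const_mul _)
  calc ∫ m in Icc a b, (m - t) ^ 2 * f m
      = ∫ m in Icc a b, (m ^ 2 * f m - 2 * t * (m * f m)) + t ^ 2 * f m := by
        congr 1 with m; ring
    _ = _ := by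
        rw [integral_add h21 (hf.const_mul _), integral_sub h2 (h1.const_mul _),
          integral_const_mul, integral_const_mul]

theorem setIntegral_sq_sub_mul_le_of_eq_mean (hf₀ : ∀ m ∈ Icc a b, 0 ≤ f m)
    (hf : IntegrableOn f (Icc a b)) {x : ℝ}
    (hx : ∫ m in Icc a b, m * f m = x * ∫ m in Icc a b, f m) :
    ∫ m in Icc a b, (m - x) ^ 2 * f m ≤ ((b - a) / 2) ^ 2 * ∫ m in Icc a b, f m := by
  -- The second moment about the mean is at most the one about the midpoint `c`.
  set c := (a + b) / 2
  have hmid : ∫ m in Icc a b, (m - c) ^ 2 * f m ≤ ((b - a) / 2) ^ 2 * ∫ m in Icc a b, f m := by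
    rw [← integral_const_mul]
    refine setIntegral_mono_on (hf.continuousOn_mul (by fun_prop) isCompact_Icc)
      (hf.const_mul _) measurableSet_Icc fun m hm => ?_
    have : (m - c) ^ 2 ≤ ((b - a) / 2) ^ 2 := by
      simp only [c]; nlinarith [mul_nonneg (sub_nonneg.2 hm.1) (sub_nonneg.2 hm.2)]
    exact mul_le_mul_of_nonneg_right this (hf₀ m hm)
  have hg : 0 ≤ ∫ m in Icc a b, f m := setIntegral_nonneg measurableSet_Icc hf₀
  rw [setIntegral_sq_sub_mul_eq hf, hx] at hmid ⊢
  nlinarith [mul_nonneg (sq_nonneg (x - c)) hg]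

theorem abs_mul_setIntegral_sub_setIntegral_mul_le {μ : ℝ → ℝ} {x D C : ℝ}
    (hf₀ : ∀ m ∈ Icc a b, 0 ≤ f m) (hf : IntegrableOn f (Icc a b))
    (hμ : ContinuousOn μ (Icc a b))
    (hx : ∫ m in Icc a b, m * f m = x * ∫ m in Icc a b, f m)
    (htangent : ∀ m ∈ Icc a b, |μ m - μ x - D * (m - x)| ≤ C * (m - x) ^ 2) :
    |μ x * (∫ m in Icc a b, f m) - ∫ m in Icc a b, μ m * f m|
      ≤ C * ∫ m in Icc a b, (m - x) ^ 2 * f m := by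
  have hμf : IntegrableOn (fun m => μ m * f m) (Icc a b) := hf.continuousOn_mul hμ isCompact_Icc
  have hmf : IntegrableOn (fun m => m * f m) (Icc a b) :=
    hf.continuousOn_mul continuousOn_id isCompact_Icc
  have hμx : IntegrableOn (fun m => μ m * f m - μ x * f m) (Icc a b) := hμf.sub (hf.const_mul _)
  have hmx : IntegrableOn (fun m => m * f m - x * f m) (Icc a b) := hmf.sub (hf.const_mul _)
  have hremainder : ∫ m in Icc a b, (μ m - μ x - D * (m - x)) * f m
      = (∫ m in Icc a b, μ m * f m) - μ x * ∫ m in Icc a b, f m := by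
    calc ∫ m in Icc a b, (μ m - μ x - D * (m - x)) * f m
        = ∫ m in Icc a b, (μ m * f m - μ x * f m) - D * (m * f m - x * f m) := by
          congr 1 with m; ring
      _ = (∫ m in Icc a b, μ m * f m) - μ x * (∫ m in Icc a b, f m)
          - D * ((∫ m in Icc a b, m * f m) - x * ∫ m in Icc a b, f m) := by
          rw [integral_sub hμx (hmx.const_mul _), integral_sub hμf (hf.const_mul _),
            integral_const_mul, integral_const_mul, integral_sub hmf (hf.const_mul _),
            integral_const_mul]
      _ = _ := by rw [hx, sub_self, mul_zero, sub_zero]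
  rw [abs_sub_comm, ← hremainder, ← integral_const_mul, ← Real.norm_eq_abs]
  refine norm_integral_le_of_norm_le
    ((hf.continuousOn_mul (by fun_prop) isCompact_Icc).const_mul C)
    (ae_restrict_of_forall_mem measurableSet_Icc fun m hm => ?_)
  rw [norm_mul, Real.norm_eq_abs, Real.norm_eq_abs, abs_of_nonneg (hf₀ m hm), ← mul_assoc]
  exact mul_le_mul_of_nonneg_right (htangent m hm) (hf₀ m hm)

theorem abs_mul_weightedMean_sub_setIntegral_mul_le {μ : ℝ → ℝ} {s t L : ℝ} (hst : s < t)
    (hab : Icc a b ⊆ Icc s t) (hμ : ContDiffOn ℝ 2 μ (Icc s t))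
    (hL : ∀ y ∈ Icc s t, |iteratedDerivWithin 2 μ (Icc s t) y| ≤ L)
    (hf₀ : ∀ m ∈ Icc a b, 0 ≤ f m) (hf : IntegrableOn f (Icc a b))
    (hg : 0 < ∫ m in Icc a b, f m) :
    |μ (weightedMean f (Icc a b)) * (∫ m in Icc a b, f m) - ∫ m in Icc a b, μ m * f m|
      ≤ L * (b - a) ^ 2 / 8 * ∫ m in Icc a b, f m := by
  set x := weightedMean f (Icc a b)
  have hxI : x ∈ Icc s t := hab (weightedMean_mem_Icc hf₀ hf hg)
  have hL0 : 0 ≤ L := (abs_nonneg _).trans (hL x hxI)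
  have hx : ∫ m in Icc a b, m * f m = x * ∫ m in Icc a b, f m :=
    (div_mul_cancel₀ _ hg.ne').symm
  calc _ ≤ L / 2 * ∫ m in Icc a b, (m - x) ^ 2 * f m :=
        abs_mul_setIntegral_sub_setIntegral_mul_le hf₀ hf (hμ.continuousOn.mono hab) hx
          fun m hm =>
            abs_sub_sub_derivWithin_mul_le_of_abs_iteratedDerivWithin_two_le hst hμ hL hxI (hab hm)
    _ ≤ L / 2 * (((b - a) / 2) ^ 2 * ∫ m in Icc a b, f m) := by
        gcongr; exact setIntegral_sq_sub_mul_le_of_eq_mean hf₀ hf hx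
    _ = L * (b - a) ^ 2 / 8 * ∫ m in Icc a b, f m := by ring

end Bin

theorem sum_setIntegral_Icc_of_monotone {p : ℕ → ℝ} (hp : Monotone p) {h : ℝ → ℝ} (n : ℕ)
    (hh : IntegrableOn h (Icc (p 0) (p n))) :
    ∑ k ∈ Finset.range n, ∫ m in Icc (p k) (p (k + 1)), h m = ∫ m in Icc (p 0) (p n), h m := by
  have hIcc : ∀ i j, i ≤ j → ∫ m in Icc (p i) (p j), h m = ∫ m in p i..p j, h m :=
    fun i j hij => by rw [intervalIntegral.integral_of_le (hp hij), integral_Icc_eq_integral_Ioc]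
  rw [hIcc 0 n n.zero_le, ← intervalIntegral.sum_integral_adjacent_intervals]
  · exact Finset.sum_congr rfl fun k _ => hIcc k (k + 1) k.le_succ
  · intro k hk
    exact (intervalIntegrable_iff_integrableOn_Icc_of_le (hp k.le_succ)).2
      (hh.mono_set (Icc_subset_Icc (hp k.zero_le) (hp hk)))

noncomputable def uniformGrid (s₀ S : ℝ) (K n : ℕ) : ℝ := s₀ + n * (S / K)

section UniformGrid

variable {s₀ S : ℝ} {K : ℕ}

theorem uniformGrid_monotone (hS : 0 ≤ S) : Monotone (uniformGrid s₀ S K) :=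
  fun i j hij => by unfold uniformGrid; gcongr

theorem uniformGrid_zero : uniformGrid s₀ S K 0 = s₀ := by simp [uniformGrid]

theorem uniformGrid_self (hK : K ≠ 0) : uniformGrid s₀ S K K = s₀ + S := by
  simp [uniformGrid, mul_div_cancel₀ S (Nat.cast_ne_zero.2 hK)]

theorem uniformGrid_succ_sub (n : ℕ) :
    uniformGrid s₀ S K (n + 1) - uniformGrid s₀ S K n = S / K := by
  simp only [uniformGrid]; push_cast; ring

theorem Icc_uniformGrid_subset (hS : 0 ≤ S) {n : ℕ} (hn : n < K) :
    Icc (uniformGrid s₀ S K n) (uniformGrid s₀ S K (n + 1)) ⊆ Icc s₀ (s₀ + S) := by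
  have hlo := uniformGrid_monotone (s₀ := s₀) (K := K) hS n.zero_le
  have hhi := uniformGrid_monotone (s₀ := s₀) (K := K) hS hn
  rw [uniformGrid_zero] at hlo
  rw [uniformGrid_self (by omega)] at hhi
  exact Icc_subset_Icc hlo hhi

theorem sum_setIntegral_uniformGrid (hK : K ≠ 0) (hS : 0 ≤ S) {h : ℝ → ℝ}
    (hh : IntegrableOn h (Icc s₀ (s₀ + S))) :
    ∑ k : Fin K, ∫ m in Icc (uniformGrid s₀ S K k) (uniformGrid s₀ S K (k + 1)), h m
      = ∫ m in Icc s₀ (s₀ + S), h m := by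
  rw [Fin.sum_univ_eq_sum_range (fun k => ∫ m in Icc (uniformGrid s₀ S K k)
      (uniformGrid s₀ S K (k + 1)), h m), sum_setIntegral_Icc_of_monotone
      (uniformGrid_monotone hS), uniformGrid_zero, uniformGrid_self hK]
  rwa [uniformGrid_zero, uniformGrid_self hK]

end UniformGrid

theorem stmt6_general (K : ℕ) (hK : 0 < K) (s₀ S : ℝ) (hS : 0 < S)
    (μ f₀ : ℝ → ℝ) (L : ℝ)
    (B : Fin K → Set ℝ)
    (hB : ∀ k, B k = Set.Icc (s₀ + (k : ℕ) * (S / K)) (s₀ + ((k : ℕ) + 1) * (S / K)))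
    (hf₀nn : ∀ m, 0 ≤ f₀ m)
    (hsupp : ∀ m, f₀ m ≠ 0 → m ∈ Set.Icc s₀ (s₀ + S))
    (hf₀int : Integrable f₀) (hf₀1 : ∫ m, f₀ m = 1)
    (hC2 : ContDiffOn ℝ 2 μ (Set.Icc s₀ (s₀ + S)))
    (hL : ∀ m ∈ Set.Icc s₀ (s₀ + S),
      |iteratedDerivWithin 2 μ (Set.Icc s₀ (s₀ + S)) m| ≤ L)
    (g mk : Fin K → ℝ)
    (hg : ∀ k, g k = ∫ m in B k, f₀ m) (hgpos : ∀ k, 0 < g k)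
    (hmk : ∀ k, mk k = (∫ m in B k, m * f₀ m) / g k) :
    |∑ k, μ (mk k) * g k - ∫ m, μ m * f₀ m| ≤ L * S ^ 2 / (8 * K ^ 2) := by
  have hB' : ∀ k : Fin K, B k = Icc (uniformGrid s₀ S K k) (uniformGrid s₀ S K (k + 1)) :=
    fun k => by simp [uniformGrid, hB k]
  have hbin : ∀ k, |μ (mk k) * g k - ∫ m in B k, μ m * f₀ m| ≤ L * (S / K) ^ 2 / 8 * g k := by
    intro k
    have := abs_mul_weightedMean_sub_setIntegral_mul_le (by linarith)
      (Icc_uniformGrid_subset hS.le k.isLt) hC2 hL (fun m _ => hf₀nn m) hf₀int.integrableOn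
      (hB' k ▸ hg k ▸ hgpos k)
    rwa [uniformGrid_succ_sub, ← hB' k, ← hg k, weightedMean, ← hg k, ← hmk k] at this
  have hsum : ∀ h : ℝ → ℝ, IntegrableOn h (Icc s₀ (s₀ + S)) →
      (∀ m ∉ Icc s₀ (s₀ + S), h m = 0) → ∑ k, ∫ m in B k, h m = ∫ m, h m := by
    intro h hhI hh0
    simp only [hB']
    rw [sum_setIntegral_uniformGrid hK.ne' hS.le hhI,
      setIntegral_eq_integral_of_forall_compl_eq_zero hh0]
  have hf₀zero : ∀ m ∉ Icc s₀ (s₀ + S), f₀ m = 0 := fun m hm => by_contra fun h => hm (hsupp m h)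
  have hg1 : ∑ k, g k = 1 := by
    simp only [hg]; rw [hsum f₀ hf₀int.integrableOn hf₀zero, hf₀1]
  have hμf₀ : ∑ k, ∫ m in B k, μ m * f₀ m = ∫ m, μ m * f₀ m :=
    hsum _ (hf₀int.integrableOn.continuousOn_mul hC2.continuousOn isCompact_Icc)
      fun m hm => by rw [hf₀zero m hm, mul_zero]
  calc |∑ k, μ (mk k) * g k - ∫ m, μ m * f₀ m|
      = |∑ k, (μ (mk k) * g k - ∫ m in B k, μ m * f₀ m)| := by
        rw [Finset.sum_sub_distrib, hμf₀]
    _ ≤ ∑ k, L * (S / K) ^ 2 / 8 * g k :=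
        (Finset.abs_sum_le_sum_abs _ _).trans (Finset.sum_le_sum fun k _ => hbin k)
    _ = L * S ^ 2 / (8 * K ^ 2) := by
        rw [← Finset.mul_sum, hg1]; field_simp

/-- Equal-width corollary of Lemma 2: with `K` bins of width `S/K`, the debiased
coarsening error is at most `L S² / (8 K²)`, i.e. `O(1/K²)`. -/
theorem stmt6 (K : ℕ) (hK : 0 < K) (s₀ S : ℝ) (hS : 0 < S)
    (μ f₀ : ℝ → ℝ) (L : ℝ)
    (B : Fin K → Set ℝ)
    (hB : ∀ k, B k = Set.Icc (s₀ + (k : ℕ) * (S / K)) (s₀ + ((k : ℕ) + 1) * (S / K)))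
    (hf₀nn : ∀ m, 0 ≤ f₀ m)
    (hsupp : ∀ m, f₀ m ≠ 0 → m ∈ Set.Icc s₀ (s₀ + S))
    (hf₀int : Integrable f₀) (hf₀1 : ∫ m, f₀ m = 1)
    (hμf₀int : Integrable (fun m => μ m * f₀ m))
    (hmf₀int : Integrable (fun m => m * f₀ m))
    (hC2 : ContDiffOn ℝ 2 μ (Set.Icc s₀ (s₀ + S)))
    (hL : ∀ m ∈ Set.Icc s₀ (s₀ + S),
      |iteratedDerivWithin 2 μ (Set.Icc s₀ (s₀ + S)) m| ≤ L)
    (g mk : Fin K → ℝ)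
    (hg : ∀ k, g k = ∫ m in B k, f₀ m) (hgpos : ∀ k, 0 < g k)
    (hmk : ∀ k, mk k = (∫ m in B k, m * f₀ m) / g k) :
    |∑ k, μ (mk k) * g k - ∫ m, μ m * f₀ m| ≤ L * S ^ 2 / (8 * K ^ 2) :=
  stmt6_general K hK s₀ S hS μ f₀ L B hB hf₀nn hsupp hf₀int hf₀1 hC2 hL g mk hg hgpos hmk
end

section
/- Under the setup of the naive coarsening error with bounded support of length S, equal-width bins of width S/K, and |μ'| ≤ L on the support, the naive coarsening error satisfies |Σ_k μ_k(1) g_k(0) − ∫ μ f₀| ≤ L S / K, i.e., it is O(1/K). -/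
/-!
On a bin of width `h` the bound `|μ'| ≤ L` confines `μ` to an interval `[lo, hi]` with
`hi - lo ≤ L h`. Both the `f₁`-weighted average of `μ` over the bin and the `f₀`-weighted integral
of `μ` divided by the bin's `f₀`-mass lie in `[lo, hi]`, so the bin contributes an error of at most
`L h` times its `f₀`-mass. The bins overlap only in endpoints and cover the support of `f₀`, so
these masses add up to `∫ f₀ = 1`.
-/

open MeasureTheory Set

theorem abs_mul_sub_le_of_mem_Icc {a b g lo hi : ℝ} (ha : a ∈ Icc lo hi)
    (hb : b ∈ Icc (lo * g) (hi * g)) (hg : 0 ≤ g) : |a * g - b| ≤ (hi - lo) * g := by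
  obtain ⟨ha₁, ha₂⟩ := ha
  obtain ⟨hb₁, hb₂⟩ := hb
  rw [abs_le]
  constructor <;> nlinarith

section WeightedAverage

variable {α : Type*} [MeasurableSpace α] {ν : Measure α} {s : Set α} {μ f f₀ f₁ : α → ℝ}
  {lo hi : ℝ}

theorem setIntegral_mul_mem_Icc (hs : MeasurableSet s) (hμ : MapsTo μ s (Icc lo hi))
    (hf : ∀ m ∈ s, 0 ≤ f m) (hfi : IntegrableOn f s ν)
    (hμfi : IntegrableOn (fun m => μ m * f m) s ν) :
    ∫ m in s, μ m * f m ∂ν ∈ Icc (lo * ∫ m in s, f m ∂ν) (hi * ∫ m in s, f m ∂ν) := by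
  rw [← integral_const_mul, ← integral_const_mul]
  exact ⟨setIntegral_mono_on (hfi.const_mul _) hμfi hs
      fun m hm => mul_le_mul_of_nonneg_right (hμ hm).1 (hf m hm),
    setIntegral_mono_on hμfi (hfi.const_mul _) hs
      fun m hm => mul_le_mul_of_nonneg_right (hμ hm).2 (hf m hm)⟩

theorem setIntegral_mul_div_mem_Icc (hs : MeasurableSet s) (hμ : MapsTo μ s (Icc lo hi))
    (hf : ∀ m ∈ s, 0 ≤ f m) (hfi : IntegrableOn f s ν)
    (hμfi : IntegrableOn (fun m => μ m * f m) s ν) (hpos : 0 < ∫ m in s, f m ∂ν) :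
    (∫ m in s, μ m * f m ∂ν) / ∫ m in s, f m ∂ν ∈ Icc lo hi := by
  obtain ⟨h₁, h₂⟩ := setIntegral_mul_mem_Icc hs hμ hf hfi hμfi
  exact ⟨(le_div_iff₀ hpos).2 h₁, (div_le_iff₀ hpos).2 h₂⟩

theorem abs_setIntegral_mul_div_mul_sub_le (hs : MeasurableSet s)
    (hμ : MapsTo μ s (Icc lo hi))
    (hf₀ : ∀ m ∈ s, 0 ≤ f₀ m) (hf₀i : IntegrableOn f₀ s ν)
    (hμf₀i : IntegrableOn (fun m => μ m * f₀ m) s ν)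
    (hf₁ : ∀ m ∈ s, 0 ≤ f₁ m) (hf₁i : IntegrableOn f₁ s ν)
    (hμf₁i : IntegrableOn (fun m => μ m * f₁ m) s ν) (hf₁pos : 0 < ∫ m in s, f₁ m ∂ν) :
    |(∫ m in s, μ m * f₁ m ∂ν) / (∫ m in s, f₁ m ∂ν) * (∫ m in s, f₀ m ∂ν)
        - ∫ m in s, μ m * f₀ m ∂ν| ≤ (hi - lo) * ∫ m in s, f₀ m ∂ν :=
  abs_mul_sub_le_of_mem_Icc (setIntegral_mul_div_mem_Icc hs hμ hf₁ hf₁i hμf₁i hf₁pos)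
    (setIntegral_mul_mem_Icc hs hμ hf₀ hf₀i hμf₀i) (setIntegral_nonneg hs hf₀)

end WeightedAverage

theorem exists_mapsTo_Icc_sub_le_of_abs_deriv_le {μ μ' : ℝ → ℝ} {a b L : ℝ} (hab : a ≤ b)
    (hderiv : ∀ m ∈ Icc a b, HasDerivAt μ (μ' m) m ∧ |μ' m| ≤ L) :
    ∃ lo hi, MapsTo μ (Icc a b) (Icc lo hi) ∧ hi - lo ≤ L * (b - a) := by
  have hne : (Icc a b).Nonempty := nonempty_Icc.2 hab
  have hcont : ContinuousOn μ (Icc a b) := fun m hm =>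
    (hderiv m hm).1.continuousAt.continuousWithinAt
  obtain ⟨q, hq, hmin⟩ := isCompact_Icc.exists_isMinOn hne hcont
  obtain ⟨p, hp, hmax⟩ := isCompact_Icc.exists_isMaxOn hne hcont
  refine ⟨μ q, μ p, fun m hm => ⟨hmin hm, hmax hm⟩, ?_⟩
  have hL : 0 ≤ L := (abs_nonneg _).trans (hderiv a (left_mem_Icc.2 hab)).2
  have hlip : |μ p - μ q| ≤ L * |p - q| := by
    simpa only [Real.norm_eq_abs] using
      (convex_Icc a b).norm_image_sub_le_of_norm_hasDerivWithin_le
        (fun m hm => (hderiv m hm).1.hasDerivWithinAt) (fun m hm => (hderiv m hm).2) hq hp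
  have hpq : |p - q| ≤ b - a := abs_sub_le_of_le_of_le hp.1 hp.2 hq.1 hq.2
  calc μ p - μ q ≤ |μ p - μ q| := le_abs_self _
    _ ≤ L * |p - q| := hlip
    _ ≤ L * (b - a) := mul_le_mul_of_nonneg_left hpq hL

theorem abs_setIntegral_Icc_mul_div_mul_sub_le {μ μ' f₀ f₁ : ℝ → ℝ} {a b L : ℝ} (hab : a ≤ b)
    (hderiv : ∀ m ∈ Icc a b, HasDerivAt μ (μ' m) m ∧ |μ' m| ≤ L)
    (hf₀ : ∀ m ∈ Icc a b, 0 ≤ f₀ m) (hf₀i : IntegrableOn f₀ (Icc a b))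
    (hμf₀i : IntegrableOn (fun m => μ m * f₀ m) (Icc a b))
    (hf₁ : ∀ m ∈ Icc a b, 0 ≤ f₁ m) (hf₁i : IntegrableOn f₁ (Icc a b))
    (hμf₁i : IntegrableOn (fun m => μ m * f₁ m) (Icc a b))
    (hf₁pos : 0 < ∫ m in Icc a b, f₁ m) :
    |(∫ m in Icc a b, μ m * f₁ m) / (∫ m in Icc a b, f₁ m) * (∫ m in Icc a b, f₀ m)
        - ∫ m in Icc a b, μ m * f₀ m| ≤ L * (b - a) * ∫ m in Icc a b, f₀ m := by
  obtain ⟨lo, hi, hμ, hosc⟩ := exists_mapsTo_Icc_sub_le_of_abs_deriv_le hab hderiv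
  exact (abs_setIntegral_mul_div_mul_sub_le measurableSet_Icc hμ hf₀ hf₀i hμf₀i hf₁ hf₁i hμf₁i
    hf₁pos).trans (mul_le_mul_of_nonneg_right hosc (setIntegral_nonneg measurableSet_Icc hf₀))

theorem Icc_add_mul_subset_Icc {a h : ℝ} (hh : 0 ≤ h) {k n : ℕ} (hk : k + 1 ≤ n) :
    Icc (a + k * h) (a + (k + 1) * h) ⊆ Icc a (a + n * h) := by
  have hkn : (k : ℝ) + 1 ≤ n := by exact_mod_cast hk
  apply Icc_subset_Icc <;> nlinarith [(Nat.cast_nonneg k : (0 : ℝ) ≤ k)]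

theorem sum_setIntegral_Icc_add_mul {f : ℝ → ℝ} {a h : ℝ} (hh : 0 ≤ h) {n : ℕ}
    (hf : IntegrableOn f (Icc a (a + n * h))) :
    ∑ k : Fin n, ∫ m in Icc (a + (k : ℕ) * h) (a + ((k : ℕ) + 1) * h), f m
      = ∫ m in Icc a (a + n * h), f m := by
  have hle : ∀ k : ℕ, a + k * h ≤ a + (k + 1) * h := fun k => by nlinarith
  have hpiece : ∀ k : ℕ, ∫ m in Icc (a + k * h) (a + (k + 1) * h), f m
      = ∫ m in (a + k * h)..(a + ((k + 1 : ℕ) : ℝ) * h), f m := fun k => by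
    rw [Nat.cast_succ, intervalIntegral.integral_of_le (hle k), integral_Icc_eq_integral_Ioc]
  rw [Fin.sum_univ_eq_sum_range (fun k => ∫ m in Icc (a + k * h) (a + (k + 1) * h), f m),
    Finset.sum_congr rfl fun k _ => hpiece k,
    intervalIntegral.sum_integral_adjacent_intervals (a := fun k : ℕ => a + k * h) fun k hk => ?_]
  · rw [Nat.cast_zero, zero_mul, add_zero, intervalIntegral.integral_of_le (by nlinarith),
      integral_Icc_eq_integral_Ioc]
  · refine (hf.mono_set ?_).intervalIntegrable
    rw [uIcc_of_le (by push_cast; exact hle k), Nat.cast_succ]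
    exact Icc_add_mul_subset_Icc hh hk

theorem stmt7_general (K : ℕ) (hK : 0 < K) (s₀ S : ℝ) (hS : 0 < S)
    (μ μ' f₀ f₁ : ℝ → ℝ) (L : ℝ)
    (B : Fin K → Set ℝ)
    (hB : ∀ k, B k = Set.Icc (s₀ + (k : ℕ) * (S / K)) (s₀ + ((k : ℕ) + 1) * (S / K)))
    (hf₀nn : ∀ m, 0 ≤ f₀ m) (hf₁nn : ∀ m, 0 ≤ f₁ m)
    (hsupp : ∀ m, f₀ m ≠ 0 → m ∈ Set.Icc s₀ (s₀ + S))
    (hf₀int : Integrable f₀) (hf₀1 : ∫ m, f₀ m = 1)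
    (hμf₀int : Integrable (fun m => μ m * f₀ m))
    (hf₁bin : ∀ k, IntegrableOn f₁ (B k))
    (hμf₁bin : ∀ k, IntegrableOn (fun m => μ m * f₁ m) (B k))
    (hderiv : ∀ m ∈ Set.Icc s₀ (s₀ + S), HasDerivAt μ (μ' m) m ∧ |μ' m| ≤ L)
    (g₀ g₁ μk1 : Fin K → ℝ)
    (hg₀ : ∀ k, g₀ k = ∫ m in B k, f₀ m)
    (hg₁ : ∀ k, g₁ k = ∫ m in B k, f₁ m) (hg₁pos : ∀ k, 0 < g₁ k)
    (hμk1 : ∀ k, μk1 k = (∫ m in B k, μ m * f₁ m) / g₁ k) :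
    |∑ k, μk1 k * g₀ k - ∫ m, μ m * f₀ m| ≤ L * S / K := by
  have hh : 0 < S / K := div_pos hS (Nat.cast_pos.2 hK)
  have hend : s₀ + S = s₀ + K * (S / K) := by field_simp
  rw [hend] at hsupp hderiv
  have hf₀out : ∀ m ∉ Icc s₀ (s₀ + K * (S / K)), f₀ m = 0 := fun m hm => not_not.1 (mt (hsupp m) hm)
  have hsum : ∀ f : ℝ → ℝ, Integrable f → (∀ m ∉ Icc s₀ (s₀ + K * (S / K)), f m = 0) →
      ∑ k, ∫ m in B k, f m = ∫ m, f m := fun f hf hout => by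
    simp only [hB]
    rw [sum_setIntegral_Icc_add_mul hh.le hf.integrableOn,
      setIntegral_eq_integral_of_forall_compl_eq_zero hout]
  have hbin : ∀ k, |μk1 k * g₀ k - ∫ m in B k, μ m * f₀ m| ≤ L * (S / K) * g₀ k := fun k => by
    rw [hμk1, hg₀, hg₁, hB]
    refine (abs_setIntegral_Icc_mul_div_mul_sub_le (by nlinarith)
      (fun m hm => hderiv m (Icc_add_mul_subset_Icc hh.le k.2 hm)) (fun m _ => hf₀nn m)
      hf₀int.integrableOn hμf₀int.integrableOn (fun m _ => hf₁nn m) (hB k ▸ hf₁bin k)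
      (hB k ▸ hμf₁bin k) (hB k ▸ hg₁ k ▸ hg₁pos k)).trans_eq ?_
    ring
  calc |∑ k, μk1 k * g₀ k - ∫ m, μ m * f₀ m|
      = |∑ k, (μk1 k * g₀ k - ∫ m in B k, μ m * f₀ m)| := by
        rw [Finset.sum_sub_distrib, hsum _ hμf₀int fun m hm => by rw [hf₀out m hm, mul_zero]]
    _ ≤ ∑ k, L * (S / K) * g₀ k :=
        (Finset.abs_sum_le_sum_abs _ _).trans (Finset.sum_le_sum fun k _ => hbin k)
    _ = L * S / K := by
        rw [← Finset.mul_sum, Finset.sum_congr rfl fun k _ => hg₀ k, hsum f₀ hf₀int hf₀out, hf₀1]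
        ring

/-- Equal-width corollary of Lemma 1: with `K` bins of width `S/K` and `|μ'| ≤ L`,
the naive coarsening error is at most `L S / K`, i.e. `O(1/K)`. -/
theorem stmt7 (K : ℕ) (hK : 0 < K) (s₀ S : ℝ) (hS : 0 < S)
    (μ μ' f₀ f₁ : ℝ → ℝ) (L : ℝ)
    (B : Fin K → Set ℝ)
    (hB : ∀ k, B k = Set.Icc (s₀ + (k : ℕ) * (S / K)) (s₀ + ((k : ℕ) + 1) * (S / K)))
    (hf₀nn : ∀ m, 0 ≤ f₀ m) (hf₁nn : ∀ m, 0 ≤ f₁ m)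
    (hsupp : ∀ m, f₀ m ≠ 0 → m ∈ Set.Icc s₀ (s₀ + S))
    (hf₀int : Integrable f₀) (hf₀1 : ∫ m, f₀ m = 1)
    (hμf₀int : Integrable (fun m => μ m * f₀ m))
    (hmf₀int : Integrable (fun m => m * f₀ m))
    (hf₁bin : ∀ k, IntegrableOn f₁ (B k))
    (hμf₁bin : ∀ k, IntegrableOn (fun m => μ m * f₁ m) (B k))
    (hmf₁bin : ∀ k, IntegrableOn (fun m => m * f₁ m) (B k))
    (hderiv : ∀ m ∈ Set.Icc s₀ (s₀ + S), HasDerivAt μ (μ' m) m ∧ |μ' m| ≤ L)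
    (hLnn : 0 ≤ L)
    (g₀ g₁ μk1 : Fin K → ℝ)
    (hg₀ : ∀ k, g₀ k = ∫ m in B k, f₀ m) (hg₀pos : ∀ k, 0 < g₀ k)
    (hg₁ : ∀ k, g₁ k = ∫ m in B k, f₁ m) (hg₁pos : ∀ k, 0 < g₁ k)
    (hμk1 : ∀ k, μk1 k = (∫ m in B k, μ m * f₁ m) / g₁ k) :
    |∑ k, μk1 k * g₀ k - ∫ m, μ m * f₀ m| ≤ L * S / K :=
  stmt7_general K hK s₀ S hS μ μ' f₀ f₁ L B hB hf₀nn hf₁nn hsupp hf₀int hf₀1 hμf₀int hf₁bin hμf₁bin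
    hderiv g₀ g₁ μk1 hg₀ hg₁ hg₁pos hμk1
end

section
/- Combining the binning and smoothing errors: if μ is twice continuously differentiable with uniformly bounded second derivative, bins are intervals of width at most w_max, and the kernel and density satisfy the smoothing-bias hypotheses at each within-bin mean m_k(0), then the smoothed debiased coarsened functional θ̃_b = Σ_k μ_{b,k} g_k(0), where μ_{b,k} = E_{f₁}[μ(M)K_b(M − m_k(0))]/E_{f₁}[K_b(M − m_k(0))], satisfies |θ̃_b − ∫ μ f₀| = O(w_max² + b²) as w_max, b → 0. -/
/-!
Split the error into a binning part and a smoothing part. On a bin, `μ(m)` differs from its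
tangent line at the within-bin mean `m_k` by at most `L/2 · w²`, and the linear term integrates to
zero against `f₀` on the bin precisely because `m_k` is the mean there; summing over bins with
weights `g_k` (which add up to 1) gives `O(w²)`. For the smoothing part, substitute
`m = m_k + b u`: the numerator minus `μ(m_k)` times the denominator is the kernel average of
`(μ(m_k + bu) - μ(m_k)) f₁(m_k + bu)`, which equals `μ'(m_k) f₁(m_k) b u + O(b² u²)` on the
support of `K`; the linear term vanishes since `∫ u K = 0`, and the denominator is at least `δ`
since `f₁ ≥ δ` near the bins. So each `μ_{b,k}` is within `O(b²)` of `μ(m_k)`.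
-/

open MeasureTheory Set

theorem abs_sub_sub_deriv_mul_le {f : ℝ → ℝ} {L : ℝ} (hf : ContDiff ℝ 2 f)
    (hL : ∀ t, |iteratedDeriv 2 f t| ≤ L) (x y : ℝ) :
    |f y - f x - deriv f x * (y - x)| ≤ L / 2 * (y - x) ^ 2 := by
  rcases eq_or_ne x y with rfl | hxy
  · simp
  obtain ⟨t, -, ht⟩ := taylor_mean_remainder_lagrange_iteratedDeriv hxy hf.contDiffOn
  have hderiv : derivWithin f (uIcc x y) x = deriv f x :=
    ((hf.differentiable two_ne_zero) x).derivWithin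
      ((uniqueDiffOn_uIcc hxy) x left_mem_uIcc)
  rw [taylorWithinEval_succ, taylor_within_zero_eval, iteratedDerivWithin_one, hderiv] at ht
  have hrem : f y - f x - deriv f x * (y - x) = iteratedDeriv 2 f t * (y - x) ^ 2 / 2 := by
    norm_num [smul_eq_mul] at ht; linarith
  rw [hrem, abs_div, abs_mul, abs_two, abs_of_nonneg (sq_nonneg (y - x))]
  have := mul_le_mul_of_nonneg_right (hL t) (sq_nonneg (y - x))
  linarith

theorem HasCompactSupport.integrable_mul_continuous {X : Type*} [TopologicalSpace X] [T2Space X]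
    [MeasurableSpace X] [OpensMeasurableSpace X] {ρ : Measure X} {K ψ : X → ℝ}
    (hK : Integrable K ρ) (hKcs : HasCompactSupport K) (hψ : Continuous ψ) :
    Integrable (fun u => K u * ψ u) ρ :=
  (integrableOn_iff_integrable_of_support_subset
    ((Function.support_mul_subset_left _ _).trans (subset_tsupport K))).mp
    (hK.integrableOn.mul_continuousOn hψ.continuousOn hKcs)

theorem integral_eq_sum_setIntegral {ι : Type*} [Fintype ι] {F : ℝ → ℝ} {B : ι → Set ℝ}
    (hB : ∀ k, MeasurableSet (B k)) (hdisj : Pairwise fun i j => Disjoint (B i) (B j))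
    (hF : Integrable F) (hF0 : ∀ m ∉ ⋃ k, B k, F m = 0) :
    ∫ m, F m = ∑ k, ∫ m in B k, F m := by
  rw [← integral_iUnion_fintype hB hdisj fun k => hF.integrableOn,
    setIntegral_eq_integral_of_forall_compl_eq_zero hF0]

theorem setIntegral_mul_div_mem_Icc_s13 {f : ℝ → ℝ} {c d : ℝ} (hf : ∀ m ∈ Icc c d, 0 ≤ f m)
    (hfi : IntegrableOn f (Icc c d)) (hmfi : IntegrableOn (fun m => m * f m) (Icc c d))
    (hpos : 0 < ∫ m in Icc c d, f m) :
    (∫ m in Icc c d, m * f m) / (∫ m in Icc c d, f m) ∈ Icc c d := by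
  rw [mem_Icc, le_div_iff₀ hpos, div_le_iff₀ hpos, ← integral_const_mul, ← integral_const_mul]
  exact ⟨setIntegral_mono_on (hfi.const_mul c) hmfi measurableSet_Icc
      fun m hm => mul_le_mul_of_nonneg_right hm.1 (hf m hm),
    setIntegral_mono_on hmfi (hfi.const_mul d) measurableSet_Icc
      fun m hm => mul_le_mul_of_nonneg_right hm.2 (hf m hm)⟩

theorem abs_integral_mul_sub_mul_integral_le {ρ : Measure ℝ} {μ f : ℝ → ℝ} {L w m₀ : ℝ}
    (hμ : ContDiff ℝ 2 μ) (hμ'' : ∀ t, |iteratedDeriv 2 μ t| ≤ L)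
    (hf : ∀ᵐ m ∂ρ, 0 ≤ f m) (hw : ∀ᵐ m ∂ρ, |m - m₀| ≤ w)
    (hfi : Integrable f ρ) (hmfi : Integrable (fun m => m * f m) ρ)
    (hμfi : Integrable (fun m => μ m * f m) ρ)
    (hmean : ∫ m, m * f m ∂ρ = m₀ * ∫ m, f m ∂ρ) :
    |∫ m, μ m * f m ∂ρ - μ m₀ * ∫ m, f m ∂ρ| ≤ L / 2 * w ^ 2 * ∫ m, f m ∂ρ := by
  have hrem : ∫ m, μ m * f m ∂ρ - μ m₀ * ∫ m, f m ∂ρ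
      = ∫ m, (μ m - μ m₀ - deriv μ m₀ * (m - m₀)) * f m ∂ρ := by
    have e : (fun m => (μ m - μ m₀ - deriv μ m₀ * (m - m₀)) * f m)
        = fun m => μ m * f m - (μ m₀ - deriv μ m₀ * m₀) * f m - deriv μ m₀ * (m * f m) := by
      ext m; ring
    have h₁ : Integrable (fun m => μ m * f m - (μ m₀ - deriv μ m₀ * m₀) * f m) ρ :=
      hμfi.sub (hfi.const_mul _)
    rw [e, integral_sub h₁ (hmfi.const_mul _), integral_sub hμfi (hfi.const_mul _),
      integral_const_mul, integral_const_mul, hmean]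
    ring
  have hL : 0 ≤ L := (abs_nonneg _).trans (hμ'' 0)
  rw [hrem, ← integral_const_mul, ← Real.norm_eq_abs]
  refine norm_integral_le_of_norm_le (hfi.const_mul _) ?_
  filter_upwards [hf, hw] with m hfm hwm
  rw [Real.norm_eq_abs, abs_mul, abs_of_nonneg hfm]
  refine mul_le_mul_of_nonneg_right ((abs_sub_sub_deriv_mul_le hμ hμ'' m₀ m).trans ?_) hfm
  have hsq : (m - m₀) ^ 2 ≤ w ^ 2 := by
    rw [← sq_abs]; exact pow_le_pow_left₀ (abs_nonneg _) hwm 2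
  gcongr

theorem abs_setIntegral_Icc_mul_sub_mean_le {μ f : ℝ → ℝ} {L c d w : ℝ}
    (hμ : ContDiff ℝ 2 μ) (hμ'' : ∀ t, |iteratedDeriv 2 μ t| ≤ L) (hf : ∀ m ∈ Icc c d, 0 ≤ f m)
    (hfi : IntegrableOn f (Icc c d)) (hmfi : IntegrableOn (fun m => m * f m) (Icc c d))
    (hμfi : IntegrableOn (fun m => μ m * f m) (Icc c d)) (hcd : d - c ≤ w)
    (hpos : 0 < ∫ m in Icc c d, f m) :
    |(∫ m in Icc c d, μ m * f m)
        - μ ((∫ m in Icc c d, m * f m) / ∫ m in Icc c d, f m) * ∫ m in Icc c d, f m|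
      ≤ L / 2 * w ^ 2 * ∫ m in Icc c d, f m := by
  set m₀ := (∫ m in Icc c d, m * f m) / ∫ m in Icc c d, f m
  have hm₀ : m₀ ∈ Icc c d := setIntegral_mul_div_mem_Icc_s13 hf hfi hmfi hpos
  have hw : ∀ m ∈ Icc c d, |m - m₀| ≤ w := fun m hm => by
    rw [abs_le]; constructor <;> linarith [hm.1, hm.2, hm₀.1, hm₀.2]
  exact abs_integral_mul_sub_mul_integral_le hμ hμ''
    ((ae_restrict_iff' measurableSet_Icc).mpr (ae_of_all _ hf))
    ((ae_restrict_iff' measurableSet_Icc).mpr (ae_of_all _ hw)) hfi hmfi hμfi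
    (div_mul_cancel₀ _ hpos.ne').symm

theorem integral_mul_rescaled_kernel (K G : ℝ → ℝ) (m₀ : ℝ) {b : ℝ} (hb : 0 < b) :
    ∫ m, G m * (K ((m - m₀) / b) / b) = ∫ u, K u * G (m₀ + b * u) := by
  set H : ℝ → ℝ := fun m => G m * (K ((m - m₀) / b) / b)
  have hH : ∀ u, H (m₀ + b * u) = b⁻¹ * (K u * G (m₀ + b * u)) := fun u => by
    simp only [H, add_sub_cancel_left, mul_div_cancel_left₀ u hb.ne']; ring
  have := Measure.integral_comp_mul_left (fun x => H (m₀ + x)) b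
  simp only [integral_add_left_eq_self, hH, integral_const_mul, abs_inv, abs_of_pos hb,
    smul_eq_mul] at this
  rw [inv_mul_eq_iff_eq_mul₀ hb.ne', mul_inv_cancel_left₀ hb.ne'] at this
  exact this.symm

theorem abs_div_sub_le_of_abs_sub_mul_le {N D a e δ : ℝ} (hδ : 0 < δ) (hD : δ ≤ D)
    (hN : |N - a * D| ≤ e) : |N / D - a| ≤ e / δ := by
  have hD0 : 0 < D := hδ.trans_le hD
  rw [div_sub' hD0.ne', abs_div, abs_of_pos hD0, mul_comm]
  exact div_le_div₀ ((abs_nonneg _).trans hN) hN hδ hD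

theorem abs_mul_sub_mul_le {a s y y₀ x L M M' N : ℝ} (ha : |a - s * x| ≤ L * x ^ 2)
    (hy : |y| ≤ M) (hyy : |y - y₀| ≤ M' * |x|) (hs : |s| ≤ N) :
    |a * y - s * y₀ * x| ≤ (L * M + N * M') * x ^ 2 := by
  have h1 : |(a - s * x) * y| ≤ L * x ^ 2 * M := by
    rw [abs_mul]; exact mul_le_mul ha hy (abs_nonneg _) ((abs_nonneg _).trans ha)
  have h2 : |s * x * (y - y₀)| ≤ N * |x| * (M' * |x|) := by
    rw [abs_mul, abs_mul]
    exact mul_le_mul (mul_le_mul_of_nonneg_right hs (abs_nonneg _)) hyy (abs_nonneg _)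
      (mul_nonneg ((abs_nonneg _).trans hs) (abs_nonneg _))
  calc |a * y - s * y₀ * x| = |(a - s * x) * y + s * x * (y - y₀)| := by
        congr 1; ring
    _ ≤ L * x ^ 2 * M + N * |x| * (M' * |x|) := (abs_add_le _ _).trans (add_le_add h1 h2)
    _ = (L * M + N * M') * x ^ 2 := by rw [← sq_abs x]; ring

theorem abs_integral_kernel_mul_le {K φ : ℝ → ℝ} {β C : ℝ} (hK : ∀ u, 0 ≤ K u)
    (hKu : ∫ u, u * K u = 0) (huK : Integrable fun u => u * K u)
    (hK2 : Integrable fun u => u ^ 2 * K u) (hKφ : Integrable fun u => K u * φ u)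
    (hφ : ∀ u, K u ≠ 0 → |φ u - β * u| ≤ C * u ^ 2) :
    |∫ u, K u * φ u| ≤ C * ∫ u, u ^ 2 * K u := by
  have hcentre : ∫ u, K u * φ u = ∫ u, (K u * φ u - β * (u * K u)) := by
    rw [integral_sub hKφ (huK.const_mul β), integral_const_mul, hKu, mul_zero, sub_zero]
  rw [hcentre, ← integral_const_mul, ← Real.norm_eq_abs]
  refine norm_integral_le_of_norm_le (hK2.const_mul C) (Filter.Eventually.of_forall fun u => ?_)
  rcases eq_or_ne (K u) 0 with h | h
  · simp [h]
  · have e : K u * φ u - β * (u * K u) = K u * (φ u - β * u) := by ring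
    rw [e, Real.norm_eq_abs, abs_mul, abs_of_nonneg (hK u)]
    calc K u * |φ u - β * u| ≤ K u * (C * u ^ 2) := mul_le_mul_of_nonneg_left (hφ u h) (hK u)
      _ = C * (u ^ 2 * K u) := by ring

theorem abs_kernel_ratio_sub_le {K μ f : ℝ → ℝ} {W : Set ℝ} {L Mf M1 Mμ δ m₀ b : ℝ}
    (hK : ∀ u, 0 ≤ K u) (hKi : Integrable K) (hKcs : HasCompactSupport K)
    (hK1 : ∫ u, K u = 1) (hKu : ∫ u, u * K u = 0) (hK2 : Integrable fun u => u ^ 2 * K u)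
    (hμ : ContDiff ℝ 2 μ) (hμ'' : ∀ t, |iteratedDeriv 2 μ t| ≤ L) (hf : ContDiff ℝ 1 f)
    (hW : Convex ℝ W) (hm₀ : m₀ ∈ W) (hb : 0 < b) (hwin : ∀ u ∈ tsupport K, m₀ + b * u ∈ W)
    (hfM : ∀ p ∈ W, |f p| ≤ Mf) (hf'M : ∀ p ∈ W, |deriv f p| ≤ M1)
    (hμ'M : |deriv μ m₀| ≤ Mμ) (hδ : 0 < δ) (hfδ : ∀ p ∈ W, δ ≤ f p) :
    |(∫ m, μ m * (K ((m - m₀) / b) / b) * f m) / (∫ m, K ((m - m₀) / b) / b * f m) - μ m₀|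
      ≤ (L / 2 * Mf + Mμ * M1) * (∫ u, u ^ 2 * K u) / δ * b ^ 2 := by
  set F : ℝ → ℝ := fun u => f (m₀ + b * u)
  set Φ : ℝ → ℝ := fun u => (μ (m₀ + b * u) - μ m₀) * F u
  have hcont : Continuous fun u => m₀ + b * u := by fun_prop
  have hN : ∫ m, μ m * (K ((m - m₀) / b) / b) * f m = ∫ u, K u * (μ (m₀ + b * u) * F u) :=
    (integral_congr_ae (Filter.Eventually.of_forall fun m => by ring)).trans
      (integral_mul_rescaled_kernel K (fun m => μ m * f m) m₀ hb)
  have hD : ∫ m, K ((m - m₀) / b) / b * f m = ∫ u, K u * F u :=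
    (integral_congr_ae (Filter.Eventually.of_forall fun m => by ring)).trans
      (integral_mul_rescaled_kernel K f m₀ hb)
  have hKF : Integrable fun u => K u * F u :=
    hKcs.integrable_mul_continuous hKi (hf.continuous.comp hcont)
  have hKμF : Integrable fun u => K u * (μ (m₀ + b * u) * F u) :=
    hKcs.integrable_mul_continuous hKi ((hμ.continuous.comp hcont).mul (hf.continuous.comp hcont))
  have huK : Integrable fun u => u * K u :=
    (hKcs.integrable_mul_continuous hKi continuous_id).congr
      (Filter.Eventually.of_forall fun u => mul_comm _ _)
  have hδD : δ ≤ ∫ u, K u * F u := by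
    calc δ = ∫ u, δ * K u := by rw [integral_const_mul, hK1, mul_one]
      _ ≤ ∫ u, K u * F u := integral_mono (hKi.const_mul δ) hKF fun u => by
        rcases eq_or_ne (K u) 0 with h | h
        · simp [h]
        · rw [mul_comm]
          exact mul_le_mul_of_nonneg_left (hfδ _ (hwin u (subset_tsupport K h))) (hK u)
  have hsplit : (∫ u, K u * (μ (m₀ + b * u) * F u)) - μ m₀ * ∫ u, K u * F u
      = ∫ u, K u * Φ u := by
    rw [← integral_const_mul, ← integral_sub hKμF (hKF.const_mul (μ m₀))]
    congr 1; ext u; ring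
  have hΦ : ∀ u, K u ≠ 0 →
      |Φ u - deriv μ m₀ * f m₀ * b * u| ≤ (L / 2 * Mf + Mμ * M1) * b ^ 2 * u ^ 2 := by
    intro u hu
    have hp := hwin u (subset_tsupport K hu)
    have hlip : |F u - f m₀| ≤ M1 * |b * u| := by
      have := hW.norm_image_sub_le_of_norm_deriv_le
        (fun z _ => hf.differentiable one_ne_zero z) hf'M hm₀ hp
      simpa only [Real.norm_eq_abs, add_sub_cancel_left] using this
    have htaylor := abs_sub_sub_deriv_mul_le hμ hμ'' m₀ (m₀ + b * u)
    rw [add_sub_cancel_left] at htaylor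
    have e : Φ u - deriv μ m₀ * f m₀ * b * u
        = (μ (m₀ + b * u) - μ m₀) * F u - deriv μ m₀ * f m₀ * (b * u) := by ring
    rw [e, show (L / 2 * Mf + Mμ * M1) * b ^ 2 * u ^ 2 = (L / 2 * Mf + Mμ * M1) * (b * u) ^ 2 by
      ring]
    exact abs_mul_sub_mul_le htaylor (hfM _ hp) hlip hμ'M
  have hbias : |(∫ u, K u * (μ (m₀ + b * u) * F u)) - μ m₀ * ∫ u, K u * F u|
      ≤ (L / 2 * Mf + Mμ * M1) * b ^ 2 * ∫ u, u ^ 2 * K u := by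
    rw [hsplit]
    exact abs_integral_kernel_mul_le hK hKu huK hK2 (hKcs.integrable_mul_continuous hKi
      (((hμ.continuous.comp hcont).sub continuous_const).mul (hf.continuous.comp hcont))) hΦ
  rw [hN, hD]
  calc _ ≤ (L / 2 * Mf + Mμ * M1) * b ^ 2 * (∫ u, u ^ 2 * K u) / δ :=
        abs_div_sub_le_of_abs_sub_mul_le hδ hδD hbias
    _ = _ := by ring

theorem add_mul_mem_Icc_of_mem_closedBall {S₁ S₂ m₀ b r u : ℝ} (hm₀ : m₀ ∈ Icc S₁ S₂)
    (hb : 0 < b) (hbr : b < (|r| + 1)⁻¹) (hu : u ∈ Metric.closedBall 0 r) :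
    m₀ + b * u ∈ Icc (S₁ - 1) (S₂ + 1) := by
  rw [Metric.mem_closedBall, dist_zero_right, Real.norm_eq_abs] at hu
  have hbr' : b * (|r| + 1) < 1 := by
    rwa [← lt_div_iff₀ (by positivity), one_div]
  have hbu : |b * u| ≤ 1 := by
    rw [abs_mul, abs_of_pos hb]
    nlinarith [hu.trans (le_abs_self r), abs_nonneg u]
  obtain ⟨h₁, h₂⟩ := abs_le.mp hbu
  exact ⟨by linarith [hm₀.1], by linarith [hm₀.2]⟩

theorem exists_abs_kernel_ratio_sub_le {K μ f : ℝ → ℝ} {L δ S₁ S₂ : ℝ} (hK : ∀ u, 0 ≤ K u)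
    (hK1 : ∫ u, K u = 1) (hKu : ∫ u, u * K u = 0) (hK2 : Integrable fun u => u ^ 2 * K u)
    (hKcs : HasCompactSupport K) (hμ : ContDiff ℝ 2 μ) (hμ'' : ∀ t, |iteratedDeriv 2 μ t| ≤ L)
    (hf : ContDiff ℝ 2 f) (hδ : 0 < δ) (hfδ : ∀ p ∈ Icc (S₁ - 1) (S₂ + 1), δ ≤ f p) :
    ∃ C, ∃ b₀ > (0 : ℝ), ∀ b ∈ Ioo 0 b₀, ∀ m₀ ∈ Icc S₁ S₂,
      |(∫ m, μ m * (K ((m - m₀) / b) / b) * f m) / (∫ m, K ((m - m₀) / b) / b * f m) - μ m₀|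
        ≤ C * b ^ 2 := by
  set W := Icc (S₁ - 1) (S₂ + 1)
  have hKi : Integrable K := Integrable.of_integral_ne_zero (by rw [hK1]; exact one_ne_zero)
  obtain ⟨r, hr⟩ := hKcs.isCompact.isBounded.subset_closedBall 0
  obtain ⟨Mf, hMf⟩ := isCompact_Icc.exists_bound_of_continuousOn (s := W)
    hf.continuous.continuousOn
  obtain ⟨M1, hM1⟩ := isCompact_Icc.exists_bound_of_continuousOn (s := W)
    (hf.continuous_deriv one_le_two).continuousOn
  obtain ⟨Mμ, hMμ⟩ := isCompact_Icc.exists_bound_of_continuousOn (s := Icc S₁ S₂)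
    (hμ.continuous_deriv one_le_two).continuousOn
  refine ⟨(L / 2 * Mf + Mμ * M1) * (∫ u, u ^ 2 * K u) / δ, (|r| + 1)⁻¹, by positivity,
    fun b hb m₀ hm₀ => ?_⟩
  exact abs_kernel_ratio_sub_le hK hKi hKcs hK1 hKu hK2 hμ hμ'' (hf.of_le one_le_two)
    (convex_Icc _ _) ⟨by linarith [hm₀.1], by linarith [hm₀.2]⟩ hb.1
    (fun u hu => add_mul_mem_Icc_of_mem_closedBall hm₀ hb.1 hb.2 (hr hu)) hMf hM1
    (hMμ _ hm₀) hδ hfδ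

theorem abs_sum_mul_sub_sum_le {ι : Type*} [Fintype ι] {a x g I : ι → ℝ} {ε₁ ε₂ : ℝ}
    (hg : ∀ k, 0 ≤ g k) (hg1 : ∑ k, g k = 1) (ha : ∀ k, |a k - x k| ≤ ε₁)
    (hI : ∀ k, |I k - x k * g k| ≤ ε₂ * g k) :
    |∑ k, a k * g k - ∑ k, I k| ≤ ε₁ + ε₂ := by
  calc |∑ k, a k * g k - ∑ k, I k| = |∑ k, ((a k - x k) * g k - (I k - x k * g k))| := by
        rw [← Finset.sum_sub_distrib]; congr 1; exact Finset.sum_congr rfl fun k _ => by ring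
    _ ≤ ∑ k, (ε₁ * g k + ε₂ * g k) := by
        refine (Finset.abs_sum_le_sum_abs _ _).trans (Finset.sum_le_sum fun k _ => ?_)
        refine (abs_sub _ _).trans (add_le_add ?_ (hI k))
        rw [abs_mul, abs_of_nonneg (hg k)]
        exact mul_le_mul_of_nonneg_right (ha k) (hg k)
    _ = ε₁ + ε₂ := by rw [Finset.sum_add_distrib, ← Finset.mul_sum, ← Finset.mul_sum, hg1]; ring

theorem stmt13_general (Kk μ f₀ f₁ : ℝ → ℝ) (L δ S₁ S₂ : ℝ)
    (hKnn : ∀ u, 0 ≤ Kk u)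
    (hK1 : ∫ u, Kk u = 1) (hKu : ∫ u, u * Kk u = 0)
    (hK2 : Integrable (fun u => u ^ 2 * Kk u))
    (hKcs : HasCompactSupport Kk)
    (hμC2 : ContDiff ℝ 2 μ) (hμ'' : ∀ m, |iteratedDeriv 2 μ m| ≤ L)
    (hf₀nn : ∀ m, 0 ≤ f₀ m) (hf₀1 : ∫ m, f₀ m = 1)
    (hf₀int : Integrable f₀)
    (hμf₀int : Integrable (fun m => μ m * f₀ m))
    (hmf₀int : Integrable (fun m => m * f₀ m))
    (hf₁C2 : ContDiff ℝ 2 f₁)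
    (hδ : 0 < δ)
    (hf₁δ : ∀ m ∈ Set.Icc (S₁ - 1) (S₂ + 1), δ ≤ f₁ m) :
    ∃ Cc > (0:ℝ), ∃ b₀ > (0:ℝ), ∀ b ∈ Set.Ioo (0:ℝ) b₀, ∀ wmax > (0:ℝ),
      ∀ (n : ℕ) (c d : Fin n → ℝ),
        (∀ k, c k ≤ d k) →
        (∀ k, d k - c k ≤ wmax) →
        (∀ k, Set.Icc (c k) (d k) ⊆ Set.Icc S₁ S₂) →
        (Pairwise fun i j =>
          Disjoint (Set.Icc (c i) (d i)) (Set.Icc (c j) (d j))) →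
        (∀ m, f₀ m ≠ 0 → m ∈ ⋃ k, Set.Icc (c k) (d k)) →
        ∀ (g mk μbk : Fin n → ℝ),
          (∀ k, g k = ∫ m in Set.Icc (c k) (d k), f₀ m) →
          (∀ k, 0 < g k) →
          (∀ k, mk k = (∫ m in Set.Icc (c k) (d k), m * f₀ m) / g k) →
          (∀ k, μbk k =
            (∫ m, μ m * (Kk ((m - mk k) / b) / b) * f₁ m)
              / (∫ m, (Kk ((m - mk k) / b) / b) * f₁ m)) →
          |∑ k, μbk k * g k - ∫ m, μ m * f₀ m| ≤ Cc * (wmax ^ 2 + b ^ 2) := by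
  obtain ⟨Cs, b₀, hb₀, hratio⟩ :=
    exists_abs_kernel_ratio_sub_le hKnn hK1 hKu hK2 hKcs hμC2 hμ'' hf₁C2 hδ hf₁δ
  refine ⟨|L| + |Cs| + 1, by positivity, b₀, hb₀, ?_⟩
  intro b hb wmax _ n c d _ hwidth hsub hdisj hcover g mk μbk hg hgpos hmk hμbk
  have hsmooth : ∀ k, |μbk k - μ (mk k)| ≤ Cs * b ^ 2 := fun k => by
    rw [hμbk k]
    refine hratio b hb (mk k) (hsub k ?_)
    rw [hmk k, hg k]
    exact setIntegral_mul_div_mem_Icc_s13 (fun m _ => hf₀nn m) hf₀int.integrableOn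
      hmf₀int.integrableOn (hg k ▸ hgpos k)
  have hbin : ∀ k, |(∫ m in Icc (c k) (d k), μ m * f₀ m) - μ (mk k) * g k|
      ≤ L / 2 * wmax ^ 2 * g k := fun k => by
    rw [hmk k, hg k]
    exact abs_setIntegral_Icc_mul_sub_mean_le hμC2 hμ'' (fun m _ => hf₀nn m) hf₀int.integrableOn
      hmf₀int.integrableOn hμf₀int.integrableOn (hwidth k) (hg k ▸ hgpos k)
  have hf₀0 : ∀ m ∉ ⋃ k, Icc (c k) (d k), f₀ m = 0 := fun m hm => by
    by_contra h; exact hm (hcover m h)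
  have hg1 : ∑ k, g k = 1 := by
    rw [← hf₀1, integral_eq_sum_setIntegral (fun k => measurableSet_Icc) hdisj hf₀int hf₀0]
    exact Finset.sum_congr rfl fun k _ => hg k
  rw [integral_eq_sum_setIntegral (fun k => measurableSet_Icc) hdisj hμf₀int
    fun m hm => by rw [hf₀0 m hm, mul_zero]]
  refine (abs_sum_mul_sub_sum_le (fun k => (hgpos k).le) hg1 hsmooth hbin).trans ?_
  have hL : L / 2 ≤ |L| := by linarith [le_abs_self L, abs_nonneg L]
  nlinarith [le_abs_self Cs, abs_nonneg Cs, abs_nonneg L, sq_nonneg wmax, sq_nonneg b]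

/-- Combination of Lemmas 2 and 3: the smoothed debiased coarsened functional
approximates the true functional with total error `O(wmax² + b²)`, uniformly
over binnings with bins of width at most `wmax` and bandwidths `b < b₀`. -/
theorem stmt13 (Kk μ f₀ f₁ : ℝ → ℝ) (L Lf δ S₁ S₂ : ℝ) (hS : S₁ < S₂)
    (hKnn : ∀ u, 0 ≤ Kk u) (hKsymm : ∀ u, Kk (-u) = Kk u)
    (hK1 : ∫ u, Kk u = 1) (hKu : ∫ u, u * Kk u = 0)
    (hK2 : Integrable (fun u => u ^ 2 * Kk u))
    (hKcs : HasCompactSupport Kk) (hKmeas : Measurable Kk)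
    (hμC2 : ContDiff ℝ 2 μ) (hμ'' : ∀ m, |iteratedDeriv 2 μ m| ≤ L)
    (hf₀nn : ∀ m, 0 ≤ f₀ m) (hf₀1 : ∫ m, f₀ m = 1)
    (hf₀supp : ∀ m, f₀ m ≠ 0 → m ∈ Set.Icc S₁ S₂)
    (hf₀int : Integrable f₀)
    (hμf₀int : Integrable (fun m => μ m * f₀ m))
    (hmf₀int : Integrable (fun m => m * f₀ m))
    (hf₁nn : ∀ m, 0 ≤ f₁ m) (hf₁1 : ∫ m, f₁ m = 1)
    (hf₁C2 : ContDiff ℝ 2 f₁) (hf₁'' : ∀ m, |iteratedDeriv 2 f₁ m| ≤ Lf)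
    (hδ : 0 < δ)
    (hf₁δ : ∀ m ∈ Set.Icc (S₁ - 1) (S₂ + 1), δ ≤ f₁ m) :
    ∃ Cc > (0:ℝ), ∃ b₀ > (0:ℝ), ∀ b ∈ Set.Ioo (0:ℝ) b₀, ∀ wmax > (0:ℝ),
      ∀ (n : ℕ) (c d : Fin n → ℝ),
        (∀ k, c k ≤ d k) →
        (∀ k, d k - c k ≤ wmax) →
        (∀ k, Set.Icc (c k) (d k) ⊆ Set.Icc S₁ S₂) →
        (Pairwise fun i j =>
          Disjoint (Set.Icc (c i) (d i)) (Set.Icc (c j) (d j))) →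
        (∀ m, f₀ m ≠ 0 → m ∈ ⋃ k, Set.Icc (c k) (d k)) →
        ∀ (g mk μbk : Fin n → ℝ),
          (∀ k, g k = ∫ m in Set.Icc (c k) (d k), f₀ m) →
          (∀ k, 0 < g k) →
          (∀ k, mk k = (∫ m in Set.Icc (c k) (d k), m * f₀ m) / g k) →
          (∀ k, μbk k =
            (∫ m, μ m * (Kk ((m - mk k) / b) / b) * f₁ m)
              / (∫ m, (Kk ((m - mk k) / b) / b) * f₁ m)) →
          |∑ k, μbk k * g k - ∫ m, μ m * f₀ m| ≤ Cc * (wmax ^ 2 + b ^ 2) :=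
  stmt13_general Kk μ f₀ f₁ L δ S₁ S₂ hKnn hK1 hKu hK2 hKcs hμC2 hμ'' hf₀nn hf₀1 hf₀int hμf₀int
    hmf₀int hf₁C2 hδ hf₁δ
end

section
/- Two-mediator debiased coarsening bound (single-bin core): let B₁, B₂ ⊂ ℝ be intervals of widths w₁, w₂, let ν₁ be a probability measure on B₁ with mean m₁*, and for each m₁ ∈ B₁ let ν₂(·|m₁) be a probability measure on B₂ with mean m₂*(m₁). Let μ: B₁ × B₂ → ℝ be twice continuously differentiable, and define η(m₁) = ∫ μ(m₁, m₂) dν₂(m₂|m₁). Assume η is twice continuously differentiable on B₁ with |η''| ≤ L₁ and |∂²μ/∂m₂²| ≤ L₂ on B₁ × B₂. Then |∫ η dν₁ − μ(m₁*, m₂*(m₁*))| ≤ L₁ w₁²/8 + L₂ w₂²/8. -/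
/-!
Write `m` for the mean of a probability measure `ν` on `[a, b]` and suppose `|f''| ≤ L` there.
Then `f ± L/2 (x - m)²` is convex, so Jensen's inequality bounds the gap `∫ f dν - f m` in
absolute value by `L/2 · Var ν`, and Popoviciu's inequality `Var ν ≤ (b - a)²/4` gives `L (b - a)²/8`.
In the two-mediator setting this is applied first in `m₂` to `μ m₁*` and `ν₂ m₁*`, then in
`m₁` to `η` and `ν₁`, and the two errors add up by the triangle inequality.
-/

open MeasureTheory ProbabilityTheory Set

theorem ContinuousOn.integrable_of_ae_mem_Icc {ν : Measure ℝ} [IsFiniteMeasure ν] {a b : ℝ}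
    {f : ℝ → ℝ} (hf : ContinuousOn f (Icc a b)) (hν : ∀ᵐ x ∂ν, x ∈ Icc a b) :
    Integrable f ν := by
  simpa only [IntegrableOn, Measure.restrict_eq_self_of_ae_mem hν] using
    hf.integrableOn_compact (μ := ν) isCompact_Icc

theorem convexOn_add_sq_of_neg_le_iteratedDerivWithin_two {a b L c : ℝ} {f : ℝ → ℝ}
    (hf : ContDiffOn ℝ 2 f (Icc a b))
    (hL : ∀ x ∈ Icc a b, -L ≤ iteratedDerivWithin 2 f (Icc a b) x) :
    ConvexOn ℝ (Icc a b) fun x => f x + L / 2 * (x - c) ^ 2 := by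
  set s := Icc a b
  have hderiv : ∀ x ∈ interior s, HasDerivWithinAt f (derivWithin f s x) s x ∧
      HasDerivWithinAt (derivWithin f s) (iteratedDerivWithin 2 f s x) s x := by
    intro x hx
    rw [interior_Icc] at hx
    have hs : UniqueDiffOn ℝ s := uniqueDiffOn_Icc (hx.1.trans hx.2)
    have hxs : x ∈ s := Ioo_subset_Icc_self hx
    refine ⟨(hf.differentiableOn two_ne_zero x hxs).hasDerivWithinAt, ?_⟩
    rw [iteratedDerivWithin_succ, iteratedDerivWithin_one]
    exact ((hf.derivWithin hs (by norm_num)).differentiableOn one_ne_zero x hxs).hasDerivWithinAt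
  refine convexOn_of_hasDerivWithinAt2_nonneg (convex_Icc a b)
    (hf.continuousOn.add (by fun_prop))
    (f' := fun x => derivWithin f s x + L * (x - c))
    (f'' := fun x => iteratedDerivWithin 2 f s x + L) (fun x hx => ?_) (fun x hx => ?_)
    (fun x hx => by linarith [hL x (interior_subset hx)])
  · exact ((hderiv x hx).1.add ((((hasDerivAt_id x).sub_const c).pow 2).const_mul (L / 2)
      |>.hasDerivWithinAt)).mono interior_subset |>.congr_deriv (by
        simp only [Nat.cast_ofNat, id_eq, Nat.add_one_sub_one, pow_one, mul_one]; ring)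
  · exact ((hderiv x hx).2.add ((((hasDerivAt_id x).sub_const c).const_mul L)
      |>.hasDerivWithinAt)).mono interior_subset |>.congr_deriv (by rw [mul_one])

theorem abs_integral_sub_apply_integral_le_mul_variance {ν : Measure ℝ} [IsProbabilityMeasure ν]
    {a b L : ℝ} (hν : ∀ᵐ x ∂ν, x ∈ Icc a b) {f : ℝ → ℝ} (hf : ContDiffOn ℝ 2 f (Icc a b))
    (hL : ∀ x ∈ Icc a b, |iteratedDerivWithin 2 f (Icc a b) x| ≤ L) :
    |(∫ x, f x ∂ν) - f (∫ x, x ∂ν)| ≤ L / 2 * Var[id; ν] := by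
  set m := ∫ x, x ∂ν
  have hid : Integrable id ν := continuousOn_id.integrable_of_ae_mem_Icc hν
  have hsq : Integrable (fun x => (x - m) ^ 2) ν :=
    (continuous_id.sub continuous_const |>.pow 2).continuousOn.integrable_of_ae_mem_Icc hν
  have hvar : Var[id; ν] = ∫ x, (x - m) ^ 2 ∂ν := variance_eq_integral measurable_id.aemeasurable
  have jensen : ∀ g : ℝ → ℝ, ContDiffOn ℝ 2 g (Icc a b) →
      (∀ x ∈ Icc a b, -L ≤ iteratedDerivWithin 2 g (Icc a b) x) →
      g m ≤ (∫ x, g x ∂ν) + L / 2 * Var[id; ν] := by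
    intro g hg hgL
    have hgi : Integrable g ν := hg.continuousOn.integrable_of_ae_mem_Icc hν
    have := (convexOn_add_sq_of_neg_le_iteratedDerivWithin_two (c := m) hg hgL).map_integral_le
      (hg.continuousOn.add (by fun_prop)) isClosed_Icc hν hid
      ((hg.continuousOn.add (by fun_prop)).integrable_of_ae_mem_Icc hν)
    rwa [integral_add hgi (hsq.const_mul _), integral_const_mul, ← hvar, sub_self,
      zero_pow two_ne_zero, mul_zero, add_zero] at this
  have upper := jensen f hf fun x hx => neg_le_of_abs_le (hL x hx)
  have lower := jensen (fun x => -f x) hf.neg fun x hx => by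
    rw [iteratedDerivWithin_fun_neg]
    exact neg_le_neg (le_of_abs_le (hL x hx))
  rw [integral_neg] at lower
  rw [abs_le]
  constructor <;> linarith

theorem abs_integral_sub_apply_integral_le {ν : Measure ℝ} [IsProbabilityMeasure ν]
    {a b L : ℝ} (hν : ∀ᵐ x ∂ν, x ∈ Icc a b) {f : ℝ → ℝ} (hf : ContDiffOn ℝ 2 f (Icc a b))
    (hL : ∀ x ∈ Icc a b, |iteratedDerivWithin 2 f (Icc a b) x| ≤ L) :
    |(∫ x, f x ∂ν) - f (∫ x, x ∂ν)| ≤ L * (b - a) ^ 2 / 8 := by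
  obtain ⟨x, hx⟩ := hν.exists
  have hL₀ : 0 ≤ L := (abs_nonneg _).trans (hL x hx)
  calc |(∫ x, f x ∂ν) - f (∫ x, x ∂ν)| ≤ L / 2 * Var[id; ν] :=
        abs_integral_sub_apply_integral_le_mul_variance hν hf hL
    _ ≤ L / 2 * ((b - a) / 2) ^ 2 := by
        gcongr
        exact variance_le_sq_of_bounded hν measurable_id.aemeasurable
    _ = L * (b - a) ^ 2 / 8 := by ring

theorem stmt19_general (a₁ b₁ a₂ b₂ L₁ L₂ : ℝ)
    (ν₁ : Measure ℝ) [IsProbabilityMeasure ν₁]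
    (hν₁ : ν₁ (Set.Icc a₁ b₁)ᶜ = 0)
    (ν₂ : ℝ → Measure ℝ) (hν₂prob : ∀ m₁, IsProbabilityMeasure (ν₂ m₁))
    (hν₂supp : ∀ m₁, (ν₂ m₁) (Set.Icc a₂ b₂)ᶜ = 0)
    (m₁star : ℝ) (hm₁ : m₁star = ∫ m, m ∂ν₁)
    (m₂star : ℝ → ℝ) (hm₂ : ∀ m₁, m₂star m₁ = ∫ m, m ∂(ν₂ m₁))
    (μ : ℝ → ℝ → ℝ)
    (hμC2 : ∀ m₁ ∈ Set.Icc a₁ b₁, ContDiffOn ℝ 2 (μ m₁) (Set.Icc a₂ b₂))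
    (hL₂ : ∀ m₁ ∈ Set.Icc a₁ b₁, ∀ m₂ ∈ Set.Icc a₂ b₂,
      |iteratedDerivWithin 2 (μ m₁) (Set.Icc a₂ b₂) m₂| ≤ L₂)
    (η : ℝ → ℝ) (hη : ∀ m₁, η m₁ = ∫ m₂, μ m₁ m₂ ∂(ν₂ m₁))
    (hηC2 : ContDiffOn ℝ 2 η (Set.Icc a₁ b₁))
    (hL₁ : ∀ m₁ ∈ Set.Icc a₁ b₁,
      |iteratedDerivWithin 2 η (Set.Icc a₁ b₁) m₁| ≤ L₁) :
    |(∫ m₁, η m₁ ∂ν₁) - μ m₁star (m₂star m₁star)|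
      ≤ L₁ * (b₁ - a₁) ^ 2 / 8 + L₂ * (b₂ - a₂) ^ 2 / 8 := by
  have hae₁ : ∀ᵐ x ∂ν₁, x ∈ Icc a₁ b₁ := mem_ae_iff.mpr hν₁
  have hm₁mem : m₁star ∈ Icc a₁ b₁ := hm₁ ▸ (convex_Icc a₁ b₁).integral_mem isClosed_Icc hae₁
    (continuousOn_id.integrable_of_ae_mem_Icc hae₁)
  have outer : |(∫ m₁, η m₁ ∂ν₁) - η m₁star| ≤ L₁ * (b₁ - a₁) ^ 2 / 8 :=
    hm₁ ▸ abs_integral_sub_apply_integral_le hae₁ hηC2 hL₁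
  have inner : |η m₁star - μ m₁star (m₂star m₁star)| ≤ L₂ * (b₂ - a₂) ^ 2 / 8 := by
    have := hν₂prob m₁star
    rw [hη, hm₂]
    exact abs_integral_sub_apply_integral_le (mem_ae_iff.mpr (hν₂supp m₁star))
      (hμC2 m₁star hm₁mem) (hL₂ m₁star hm₁mem)
  calc |(∫ m₁, η m₁ ∂ν₁) - μ m₁star (m₂star m₁star)|
      ≤ |(∫ m₁, η m₁ ∂ν₁) - η m₁star| + |η m₁star - μ m₁star (m₂star m₁star)| :=
        abs_sub_le _ _ _
    _ ≤ L₁ * (b₁ - a₁) ^ 2 / 8 + L₂ * (b₂ - a₂) ^ 2 / 8 := add_le_add outer inner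

/-- Two-mediator debiased coarsening bound (single-bin core, Appendix A):
evaluating the outcome surface at nested within-bin means approximates the
iterated within-bin average with error second order in each bin width. -/
theorem stmt19 (a₁ b₁ a₂ b₂ L₁ L₂ : ℝ) (h₁ : a₁ ≤ b₁) (h₂ : a₂ ≤ b₂)
    (ν₁ : Measure ℝ) [IsProbabilityMeasure ν₁]
    (hν₁ : ν₁ (Set.Icc a₁ b₁)ᶜ = 0)
    (ν₂ : ℝ → Measure ℝ) (hν₂prob : ∀ m₁, IsProbabilityMeasure (ν₂ m₁))
    (hν₂supp : ∀ m₁, (ν₂ m₁) (Set.Icc a₂ b₂)ᶜ = 0)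
    (m₁star : ℝ) (hm₁ : m₁star = ∫ m, m ∂ν₁)
    (m₂star : ℝ → ℝ) (hm₂ : ∀ m₁, m₂star m₁ = ∫ m, m ∂(ν₂ m₁))
    (μ : ℝ → ℝ → ℝ)
    (hμC2 : ∀ m₁ ∈ Set.Icc a₁ b₁, ContDiffOn ℝ 2 (μ m₁) (Set.Icc a₂ b₂))
    (hL₂ : ∀ m₁ ∈ Set.Icc a₁ b₁, ∀ m₂ ∈ Set.Icc a₂ b₂,
      |iteratedDerivWithin 2 (μ m₁) (Set.Icc a₂ b₂) m₂| ≤ L₂)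
    (η : ℝ → ℝ) (hη : ∀ m₁, η m₁ = ∫ m₂, μ m₁ m₂ ∂(ν₂ m₁))
    (hηC2 : ContDiffOn ℝ 2 η (Set.Icc a₁ b₁))
    (hL₁ : ∀ m₁ ∈ Set.Icc a₁ b₁,
      |iteratedDerivWithin 2 η (Set.Icc a₁ b₁) m₁| ≤ L₁) :
    |(∫ m₁, η m₁ ∂ν₁) - μ m₁star (m₂star m₁star)|
      ≤ L₁ * (b₁ - a₁) ^ 2 / 8 + L₂ * (b₂ - a₂) ^ 2 / 8 :=
  stmt19_general a₁ b₁ a₂ b₂ L₁ L₂ ν₁ hν₁ ν₂ hν₂prob hν₂supp m₁star hm₁ m₂star hm₂ μ hμC2 hL₂ η hη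
    hηC2 hL₁
end
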